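/- arXiv:2103.08276 — 3 statements merged into one kernel-verified Lean document; each statement's English description precedes it below -/
import Mathlib

section
/- Let R and S be rings with local units and let U be a unitary R-S-bimodule. (a) If the map λ: R → End_S(U), r ↦ (x ↦ rx), is a monomorphism and (End_S(U))(Im λ) = Im λ, then for each idempotent e ∈ R the left R-module Re is U-reflexive. (b) If the map μ: S → End_R(U), s ↦ (x ↦ xs), is a monomorphism and (Im μ)(End_R(U)) = Im μ, then for each idempotent f ∈ S the right S-module fS is U-reflexive. -/
set_option linter.unusedVariables false

/-! ### Core: non-unital rings with local units, modules, homomorphisms, categories -/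

universe u v w

open MulOpposite CategoryTheory

/-- A ring with local units: every finite subset is contained in a subring
of the form `eRe` for an idempotent `e`; equivalently, every finite subset
admits an idempotent acting as a two-sided identity on it. -/
class HasLocalUnits (R : Type u) [NonUnitalRing R] : Prop where
  exists_unit : ∀ s : Finset R, ∃ e : R, e * e = e ∧ ∀ x ∈ s, e * x = x ∧ x * e = x

/-- A (left) module over a non-unital ring. -/
class LMod (R : Type u) [NonUnitalRing R] (M : Type v) [AddCommGroup M] extends SMul R M where
  smul_add' : ∀ (r : R) (m n : M), r • (m + n) = r • m + r • n
  add_smul' : ∀ (r s : R) (m : M), (r + s) • m = r • m + s • m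
  mul_smul' : ∀ (r s : R) (m : M), (r * s) • m = r • (s • m)

section basic
variable {R : Type u} [NonUnitalRing R] {M : Type v} [AddCommGroup M] [LMod R M]

theorem LMod.smul_zero' (r : R) : r • (0 : M) = 0 := by
  have h := LMod.smul_add' r (0 : M) 0
  rw [add_zero] at h
  have h2 : r • (0 : M) + r • (0 : M) = r • (0 : M) + 0 := by rw [← h, add_zero]
  exact add_left_cancel h2

theorem LMod.zero_smul' (m : M) : (0 : R) • m = 0 := by
  have h := LMod.add_smul' (0 : R) 0 m
  rw [add_zero] at h
  have h2 : (0 : R) • m + (0 : R) • m = (0 : R) • m + 0 := by rw [← h, add_zero]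
  exact add_left_cancel h2

theorem LMod.smul_neg' (r : R) (m : M) : r • (-m) = -(r • m) := by
  have h : r • m + r • (-m) = 0 := by
    rw [← LMod.smul_add' r m (-m), add_neg_cancel, LMod.smul_zero']
  exact eq_neg_of_add_eq_zero_right h

end basic

/-- `f : M → N` is a homomorphism of (non-unital) `R`-modules. -/
structure IsLHom (R : Type u) [NonUnitalRing R] {M : Type v} {N : Type w}
    [AddCommGroup M] [AddCommGroup N] [LMod R M] [LMod R N] (f : M → N) : Prop where
  map_add : ∀ x y, f (x + y) = f x + f y
  map_smul : ∀ (r : R) (x : M), f (r • x) = r • f x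

theorem IsLHom.map_zero {R : Type u} [NonUnitalRing R] {M : Type v} {N : Type w}
    [AddCommGroup M] [AddCommGroup N] [LMod R M] [LMod R N] {f : M → N}
    (hf : IsLHom R f) : f 0 = 0 := by
  have h := hf.map_add 0 0
  rw [add_zero] at h
  have h2 : f 0 + f 0 = f 0 + 0 := by rw [← h, add_zero]
  exact add_left_cancel h2

theorem IsLHom.map_neg {R : Type u} [NonUnitalRing R] {M : Type v} {N : Type w}
    [AddCommGroup M] [AddCommGroup N] [LMod R M] [LMod R N] {f : M → N}
    (hf : IsLHom R f) (x : M) : f (-x) = -(f x) := by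
  have h : f x + f (-x) = 0 := by rw [← hf.map_add, add_neg_cancel, hf.map_zero]
  exact eq_neg_of_add_eq_zero_right h

/-- The type of homomorphisms of (non-unital) `R`-modules. -/
def LinMap (R : Type u) [NonUnitalRing R] (M : Type v) (N : Type w)
    [AddCommGroup M] [AddCommGroup N] [LMod R M] [LMod R N] : Type (max v w) :=
  {f : M → N // IsLHom R f}

namespace LinMap

variable {R : Type u} [NonUnitalRing R] {M : Type v} {N : Type w}
    [AddCommGroup M] [AddCommGroup N] [LMod R M] [LMod R N]

theorem ext {f g : LinMap R M N} (h : f.1 = g.1) : f = g := Subtype.ext h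

instance : Add (LinMap R M N) :=
  ⟨fun f g => ⟨fun x => f.1 x + g.1 x,
    ⟨fun x y => by rw [f.2.map_add, g.2.map_add]; abel,
     fun r x => by rw [f.2.map_smul, g.2.map_smul, LMod.smul_add']⟩⟩⟩

instance : Zero (LinMap R M N) :=
  ⟨⟨fun _ => 0, ⟨fun _ _ => by rw [add_zero], fun r _ => (LMod.smul_zero' r).symm⟩⟩⟩

instance : Neg (LinMap R M N) :=
  ⟨fun f => ⟨fun x => -(f.1 x),
    ⟨fun x y => by rw [f.2.map_add]; abel,
     fun r x => by rw [f.2.map_smul, LMod.smul_neg']⟩⟩⟩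

instance : AddCommGroup (LinMap R M N) where
  add_assoc f g h := ext (funext fun x => add_assoc _ _ _)
  zero_add f := ext (funext fun x => zero_add _)
  add_zero f := ext (funext fun x => add_zero _)
  add_comm f g := ext (funext fun x => add_comm _ _)
  neg_add_cancel f := ext (funext fun x => neg_add_cancel _)
  nsmul := nsmulRec
  zsmul := zsmulRec

@[simp] theorem add_apply (f g : LinMap R M N) (x : M) : (f + g).1 x = f.1 x + g.1 x := rfl
@[simp] theorem zero_apply (x : M) : (0 : LinMap R M N).1 x = 0 := rfl
@[simp] theorem neg_apply (f : LinMap R M N) (x : M) : (-f).1 x = -(f.1 x) := rfl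

end LinMap

/-- The endomorphism ring of a module over a non-unital ring, with the
"diagrammatic" multiplication `(f * g) x = g (f x)` (i.e. `f * g` means
"first `f`, then `g`", matching homomorphisms written on the right). -/
instance LinMap.instNonUnitalRing {R : Type u} [NonUnitalRing R] {M : Type v}
    [AddCommGroup M] [LMod R M] : NonUnitalRing (LinMap R M M) :=
  { (inferInstance : AddCommGroup (LinMap R M M)) with
    mul := fun f g => ⟨fun x => g.1 (f.1 x),
      ⟨fun x y => by rw [f.2.map_add, g.2.map_add], fun r x => by rw [f.2.map_smul, g.2.map_smul]⟩⟩
    left_distrib := fun f g h => LinMap.ext (funext fun x => rfl)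
    right_distrib := fun f g h => LinMap.ext (funext fun x => h.2.map_add _ _)
    zero_mul := fun f => LinMap.ext (funext fun x => f.2.map_zero)
    mul_zero := fun f => LinMap.ext (funext fun x => rfl)
    mul_assoc := fun f g h => LinMap.ext (funext fun x => rfl) }

@[simp] theorem LinMap.mul_apply {R : Type u} [NonUnitalRing R] {M : Type v}
    [AddCommGroup M] [LMod R M] (f g : LinMap R M M) (x : M) : (f * g).1 x = g.1 (f.1 x) := rfl

/-- A module `M` over a non-unital ring `R` is unitary if `RM = M`. -/
def IsUnitary (R : Type u) [NonUnitalRing R] (M : Type v) [AddCommGroup M] [LMod R M] : Prop :=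
  ∀ m : M, m ∈ AddSubgroup.closure {x : M | ∃ (r : R) (n : M), x = r • n}

/-- The `R`-submodule (as an additive subgroup) generated by a subset. -/
def lspan (R : Type u) [NonUnitalRing R] {M : Type v} [AddCommGroup M] [LMod R M]
    (X : Set M) : AddSubgroup M :=
  AddSubgroup.closure (X ∪ {m | ∃ (r : R) (x : M), x ∈ X ∧ m = r • x})

/-- A subset `A` of a module is finitely generated (as an `R`-submodule). -/
def IsFGSet (R : Type u) [NonUnitalRing R] {M : Type v} [AddCommGroup M] [LMod R M]
    (A : Set M) : Prop :=
  ∃ s : Finset M, (↑s : Set M) ⊆ A ∧ ∀ a ∈ A, a ∈ lspan R (↑s : Set M)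

/-- A finitely generated module over a non-unital ring. -/
def IsFG (R : Type u) [NonUnitalRing R] (M : Type v) [AddCommGroup M] [LMod R M] : Prop :=
  ∃ s : Finset M, ∀ m : M, m ∈ lspan R (↑s : Set M)

/-- The category of unitary left modules over a ring with local units
(objects: unitary left `R`-modules). -/
structure UMod (R : Type u) [NonUnitalRing R] : Type (max u (v + 1)) where
  carrier : Type v
  [grp : AddCommGroup carrier]
  [mod : LMod R carrier]
  unitary : IsUnitary R carrier

attribute [instance] UMod.grp UMod.mod

instance {R : Type u} [NonUnitalRing R] : CoeSort (UMod.{u, v} R) (Type v) := ⟨UMod.carrier⟩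

instance UMod.instCategory {R : Type u} [NonUnitalRing R] : Category (UMod.{u, v} R) where
  Hom M N := LinMap R M.carrier N.carrier
  id M := ⟨fun x => x, ⟨fun _ _ => rfl, fun _ _ => rfl⟩⟩
  comp f g := ⟨fun x => g.1 (f.1 x),
    ⟨fun x y => by rw [f.2.map_add, g.2.map_add], fun r x => by rw [f.2.map_smul, g.2.map_smul]⟩⟩
  id_comp f := LinMap.ext rfl
  comp_id f := LinMap.ext rfl
  assoc f g h := LinMap.ext rfl

@[simp] theorem UMod.comp_apply {R : Type u} [NonUnitalRing R] {M N K : UMod.{u, v} R}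
    (f : M ⟶ N) (g : N ⟶ K) (x : M.carrier) : (f ≫ g).1 x = g.1 (f.1 x) := rfl

@[simp] theorem UMod.id_apply {R : Type u} [NonUnitalRing R] {M : UMod.{u, v} R}
    (x : M.carrier) : (𝟙 M : M ⟶ M).1 x = x := rfl

instance UMod.instPreadditive {R : Type u} [NonUnitalRing R] :
    Preadditive (UMod.{u, v} R) where
  homGroup M N := inferInstanceAs (AddCommGroup (LinMap R M.carrier N.carrier))
  add_comp M N K f f' g := LinMap.ext (funext fun x => g.2.map_add _ _)
  comp_add M N K f g g' := LinMap.ext (funext fun x => rfl)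

/-- A unitary module `P` is a generator of the category of unitary left `R`-modules. -/
def IsGenerator (R : Type u) [NonUnitalRing R] (P : UMod.{u, v} R) : Prop :=
  ∀ (M B : UMod.{u, v} R) (f g : M ⟶ B), f ≠ g → ∃ h : P ⟶ M, h ≫ f ≠ h ≫ g

/-- A set of unitary modules is a cogenerating set for the category of
unitary left `R`-modules. -/
def IsCogenSet (R : Type u) [NonUnitalRing R] (𝒰 : Set (UMod.{u, v} R)) : Prop :=
  ∀ (B M : UMod.{u, v} R) (f g : B ⟶ M), f ≠ g → ∃ U' ∈ 𝒰, ∃ h : M ⟶ U', f ≫ h ≠ g ≫ h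
/-! ### The largest unitary submodule `C·H` of a module `H`, and induced
module structures on hom-groups -/

section umax

variable (C : Type u) [NonUnitalRing C] (H : Type v) [AddCommGroup H] [LMod C H]

/-- `C·H`, the largest unitary `C`-submodule of the `C`-module `H`. -/
def umax : AddSubgroup H :=
  AddSubgroup.closure {h : H | ∃ (c : C) (h' : H), h = c • h'}

variable {C H}

theorem smul_mem_umax (c : C) (h : H) : c • h ∈ umax C H :=
  AddSubgroup.subset_closure ⟨c, h, rfl⟩

/-- An additive, `C`-equivariant map carries `C·H` into `C·H'`. -/
theorem umax_mapsTo {H' : Type w} [AddCommGroup H'] [LMod C H'] (T : H → H')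
    (hadd : ∀ x y, T (x + y) = T x + T y) (hsmul : ∀ (c : C) (x : H), T (c • x) = c • T x)
    {h : H} (hh : h ∈ umax C H) : T h ∈ umax C H' := by
  have hT : IsLHom C T := ⟨hadd, hsmul⟩
  induction hh using AddSubgroup.closure_induction with
  | mem x hx =>
    obtain ⟨c, h', rfl⟩ := hx
    rw [hsmul]; exact smul_mem_umax c (T h')
  | zero => rw [hT.map_zero]; exact (umax C H').zero_mem
  | add x y hx hy ihx ihy => rw [hadd]; exact (umax C H').add_mem ihx ihy
  | neg x hx ihx => rw [hT.map_neg]; exact (umax C H').neg_mem ihx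

instance umax.instLMod : LMod C ↥(umax C H) where
  smul c h := ⟨c • h.1, smul_mem_umax c h.1⟩
  smul_add' c m n := Subtype.ext (LMod.smul_add' c m.1 n.1)
  add_smul' c c' m := Subtype.ext (LMod.add_smul' c c' m.1)
  mul_smul' c c' m := Subtype.ext (LMod.mul_smul' c c' m.1)

@[simp] theorem umax.smul_coe (c : C) (h : ↥(umax C H)) : (c • h).1 = c • h.1 := rfl

/-- If a second ring `D` acts on `H` commuting with the `C`-action,
then `C·H` is stable under the `D`-action. -/
theorem umax_stable {D : Type w} [NonUnitalRing D] [LMod D H] [SMulCommClass C D H]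
    (d : D) {h : H} (hh : h ∈ umax C H) : d • h ∈ umax C H :=
  umax_mapsTo (fun x => d • x) (fun x y => LMod.smul_add' d x y)
    (fun c x => (smul_comm c d x).symm) hh

instance umax.instLMod₂ {D : Type w} [NonUnitalRing D] [LMod D H] [SMulCommClass C D H] :
    LMod D ↥(umax C H) where
  smul d h := ⟨d • h.1, umax_stable d h.2⟩
  smul_add' d m n := Subtype.ext (LMod.smul_add' d m.1 n.1)
  add_smul' d d' m := Subtype.ext (LMod.add_smul' d d' m.1)
  mul_smul' d d' m := Subtype.ext (LMod.mul_smul' d d' m.1)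

instance umax.instSMulCommClass {D : Type w} [NonUnitalRing D] [LMod D H]
    [SMulCommClass C D H] : SMulCommClass C D ↥(umax C H) :=
  ⟨fun c d h => Subtype.ext (smul_comm c d h.1)⟩

/-- If `C` has local units, then `C·H` is a unitary `C`-module. -/
theorem umax_unitary [HasLocalUnits C] : IsUnitary C ↥(umax C H) := by
  intro m
  obtain ⟨h, hh⟩ := m
  induction hh using AddSubgroup.closure_induction with
  | mem x hx =>
    obtain ⟨c, h', rfl⟩ := hx
    obtain ⟨e, he, hec⟩ := HasLocalUnits.exists_unit {c}
    have hc := (hec c (Finset.mem_singleton_self c)).1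
    refine AddSubgroup.subset_closure ⟨e, ⟨c • h', smul_mem_umax c h'⟩, ?_⟩
    refine Subtype.ext ?_
    show c • h' = e • (c • h')
    rw [← LMod.mul_smul', hc]
  | zero =>
    have : (⟨(0 : H), (umax C H).zero_mem⟩ : ↥(umax C H)) = 0 := rfl
    rw [this]; exact AddSubgroup.zero_mem _
  | add x y hx hy ihx ihy =>
    have : (⟨x + y, (umax C H).add_mem hx hy⟩ : ↥(umax C H)) =
        ⟨x, hx⟩ + ⟨y, hy⟩ := rfl
    rw [this]; exact AddSubgroup.add_mem _ ihx ihy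
  | neg x hx ihx =>
    have : (⟨-x, (umax C H).neg_mem hx⟩ : ↥(umax C H)) = -⟨x, hx⟩ := rfl
    rw [this]; exact AddSubgroup.neg_mem _ ihx

end umax

section regular

variable (R : Type u) [NonUnitalRing R]

/-- The left regular module structure of a non-unital ring on itself. -/
instance NonUnitalRing.instLModSelf : LMod R R where
  smul := (· * ·)
  smul_add' := mul_add
  add_smul' := add_mul
  mul_smul' := mul_assoc

@[simp] theorem NonUnitalRing.smul_def (r s : R) : r • s = r * s := rfl

/-- The right regular module structure, as a left module over the opposite ring. -/
instance NonUnitalRing.instLModSelfOp : LMod Rᵐᵒᵖ R where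
  smul r s := s * r.unop
  smul_add' r m n := add_mul m n r.unop
  add_smul' r r' m := mul_add m r.unop r'.unop
  mul_smul' r r' m := (mul_assoc m r'.unop r.unop).symm

@[simp] theorem NonUnitalRing.op_smul_def (r : Rᵐᵒᵖ) (s : R) : r • s = s * r.unop := rfl

instance : SMulCommClass R Rᵐᵒᵖ R :=
  ⟨fun r s x => by
    show r * (x * s.unop) = (r * x) * s.unop
    rw [mul_assoc]⟩

/-- Local units pass to the opposite ring. -/
instance instHasLocalUnitsOp [HasLocalUnits R] : HasLocalUnits Rᵐᵒᵖ where
  exists_unit s := by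
    classical
    obtain ⟨e, he, h⟩ := HasLocalUnits.exists_unit (R := R) (s.image MulOpposite.unop)
    refine ⟨MulOpposite.op e, by rw [← MulOpposite.op_mul, he], fun x hx => ?_⟩
    have hx' := h x.unop (Finset.mem_image_of_mem MulOpposite.unop hx)
    constructor
    · conv_lhs => rw [← MulOpposite.op_unop x, ← MulOpposite.op_mul, hx'.2, MulOpposite.op_unop]
    · conv_lhs => rw [← MulOpposite.op_unop x, ← MulOpposite.op_mul, hx'.1, MulOpposite.op_unop]

end regular

section homact

variable {A B C : Type u} [NonUnitalRing A] [NonUnitalRing B] [NonUnitalRing C]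
variable {X : Type v} {Y : Type w} [AddCommGroup X] [AddCommGroup Y] [LMod B X] [LMod B Y]

/-- The action of `A` on `Hom_B(X, Y)` by precomposition with the right
`A`-action on `X` (homomorphisms written on the right: `(a • f) x = f (x·a)`). -/
instance LinMap.instLModPre [LMod Aᵐᵒᵖ X] [SMulCommClass B Aᵐᵒᵖ X] :
    LMod A (LinMap B X Y) where
  smul a f := ⟨fun x => f.1 (op a • x),
    ⟨fun x y => by rw [LMod.smul_add', f.2.map_add],
     fun r x => by rw [← smul_comm r (op a) x, f.2.map_smul]⟩⟩
  smul_add' a f g := LinMap.ext rfl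
  add_smul' a a' f := LinMap.ext (funext fun x => by
    show f.1 (op (a + a') • x) = f.1 (op a • x) + f.1 (op a' • x)
    rw [← f.2.map_add, ← LMod.add_smul']
    rfl)
  mul_smul' a a' f := LinMap.ext (funext fun x => by
    show f.1 (op (a * a') • x) = f.1 (op a' • (op a • x))
    rw [← LMod.mul_smul']
    rfl)

theorem LinMap.pre_smul_apply [LMod Aᵐᵒᵖ X] [SMulCommClass B Aᵐᵒᵖ X]
    (a : A) (f : LinMap B X Y) (x : X) : (a • f).1 x = f.1 (op a • x) := rfl

/-- The action of `C` on `Hom_B(X, Y)` by postcomposition with a commuting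
`C`-action on `Y`. -/
instance LinMap.instLModPost [LMod C Y] [SMulCommClass B C Y] :
    LMod C (LinMap B X Y) where
  smul c f := ⟨fun x => c • f.1 x,
    ⟨fun x y => by rw [f.2.map_add, LMod.smul_add'],
     fun r x => by rw [f.2.map_smul]; exact (smul_comm r c (f.1 x)).symm⟩⟩
  smul_add' c f g := LinMap.ext (funext fun x => LMod.smul_add' c (f.1 x) (g.1 x))
  add_smul' c c' f := LinMap.ext (funext fun x => LMod.add_smul' c c' (f.1 x))
  mul_smul' c c' f := LinMap.ext (funext fun x => LMod.mul_smul' c c' (f.1 x))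

theorem LinMap.post_smul_apply [LMod C Y] [SMulCommClass B C Y]
    (c : C) (f : LinMap B X Y) (x : X) : (c • f).1 x = c • (f.1 x) := rfl

/-- Pre- and postcomposition actions on hom-groups commute. -/
instance LinMap.instSMulCommClassPrePost [LMod Aᵐᵒᵖ X] [SMulCommClass B Aᵐᵒᵖ X]
    [LMod C Y] [SMulCommClass B C Y] : SMulCommClass A C (LinMap B X Y) :=
  ⟨fun a c f => LinMap.ext rfl⟩

end homact
/-! ### Split direct systems and direct limits of unitary modules -/

section dirsys

variable (R : Type u) [NonUnitalRing R]

/-- A split direct system of unitary left `R`-modules, indexed by a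
quasi-ordered set `(ι, rel)`: a direct system `(P_i, φ_{ij})` together with
splittings `ψ_{ji} : P_j → P_i` (for `i ≤ j`) such that `φ_{ij} ψ_{ji} = id`
and `ψ_{kj} ψ_{ji} = ψ_{ki}`. -/
structure SplitSystem (ι : Type w) (rel : ι → ι → Prop) : Type (max u w (v + 1)) where
  obj : ι → UMod.{u, v} R
  map : ∀ {i j : ι}, rel i j → (obj i ⟶ obj j)
  split : ∀ {i j : ι}, rel i j → (obj j ⟶ obj i)
  map_self : ∀ {i : ι} (h : rel i i) (x : (obj i).carrier), (map h).1 x = x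
  map_map : ∀ {i j k : ι} (hij : rel i j) (hjk : rel j k) (hik : rel i k)
    (x : (obj i).carrier), (map hjk).1 ((map hij).1 x) = (map hik).1 x
  split_map : ∀ {i j : ι} (h : rel i j) (x : (obj i).carrier),
    (split h).1 ((map h).1 x) = x
  split_split : ∀ {i j k : ι} (hij : rel i j) (hjk : rel j k) (hik : rel i k)
    (x : (obj k).carrier), (split hij).1 ((split hjk).1 x) = (split hik).1 x

/-- `P`, together with homomorphisms `φ_i : P_i → P`, is a direct limit of the
direct system `(P_i, φ_{ij})` (with directed index set): the `φ_i` are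
compatible, every element of `P` comes from some `P_i`, and everything killed
by `φ_i` is eventually killed in the system. -/
structure LimitCocone {ι : Type w} {rel : ι → ι → Prop} (D : SplitSystem.{u, v} R ι rel)
    (P : Type v) [AddCommGroup P] [LMod R P] : Type (max u w v) where
  incl : ∀ i, LinMap R (D.obj i).carrier P
  compat : ∀ {i j : ι} (h : rel i j) (x : (D.obj i).carrier),
    (incl j).1 ((D.map h).1 x) = (incl i).1 x
  exhaustive : ∀ x : P, ∃ (i : ι) (y : (D.obj i).carrier), (incl i).1 y = x
  eventually_zero : ∀ i (y : (D.obj i).carrier), (incl i).1 y = 0 →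
    ∃ j, ∃ h : rel i j, (D.map h).1 y = 0

/-- A unitary left `R`-module is locally projective if it is a direct limit of a
split direct system of finitely generated projective unitary left `R`-modules. -/
def IsLocallyProjective (P : Type v) [AddCommGroup P] [LMod R P] : Prop :=
  ∃ (ι : Type v) (rel : ι → ι → Prop),
    (∀ i, rel i i) ∧ (∀ {i j k}, rel i j → rel j k → rel i k) ∧
    Nonempty ι ∧ (∀ i j, ∃ k, rel i k ∧ rel j k) ∧
    ∃ (D : SplitSystem.{u, v} R ι rel) (_ : LimitCocone R D P),
      ∀ i, IsFG R (D.obj i).carrier ∧ CategoryTheory.Projective (D.obj i)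

variable {R}

/-- The transition maps `Ω_{ij} : End_R(P_i) → End_R(P_j)`, `α ↦ ψ_{ji} α φ_{ij}`,
of the direct system of endomorphism rings associated to a split direct system. -/
def SplitSystem.endTrans {ι : Type w} {rel : ι → ι → Prop}
    (D : SplitSystem.{u, v} R ι rel) {i j : ι} (h : rel i j)
    (a : LinMap R (D.obj i).carrier (D.obj i).carrier) :
    LinMap R (D.obj j).carrier (D.obj j).carrier :=
  ⟨fun x => (D.map h).1 (a.1 ((D.split h).1 x)),
   ⟨fun x y => by rw [(D.split h).2.map_add, a.2.map_add, (D.map h).2.map_add],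
    fun r x => by rw [(D.split h).2.map_smul, a.2.map_smul, (D.map h).2.map_smul]⟩⟩

end dirsys
/-! ### The functor `SHom_R(P,−)` and related constructions for a bimodule `P` -/

section shom

variable (R S : Type u) [NonUnitalRing R] [NonUnitalRing S]
variable (P : Type u) [AddCommGroup P] [LMod R P] [LMod Sᵐᵒᵖ P] [SMulCommClass R Sᵐᵒᵖ P]

/-- `SHom_R(P,M) = S·Hom_R(P,M)`, the largest unitary left `S`-submodule of
`Hom_R(P,M)`, as a type. -/
abbrev SHom (M : Type u) [AddCommGroup M] [LMod R M] : Type u :=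
  ↥(umax S (LinMap R P M))

variable {R S P}

/-- The action of `SHom_R(P,−)` on a homomorphism `g : M → N` (postcomposition). -/
def sHomMap {M N : Type u} [AddCommGroup M] [AddCommGroup N] [LMod R M] [LMod R N]
    (g : LinMap R M N) (α : SHom R S P M) : SHom R S P N :=
  ⟨⟨fun x => g.1 (α.1.1 x),
    ⟨fun x y => by rw [α.1.2.map_add, g.2.map_add],
     fun r x => by rw [α.1.2.map_smul, g.2.map_smul]⟩⟩,
   umax_mapsTo (C := S)
     (fun f => ⟨fun x => g.1 (f.1 x),
       ⟨fun x y => by rw [f.2.map_add, g.2.map_add],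
        fun r x => by rw [f.2.map_smul, g.2.map_smul]⟩⟩)
     (fun f f' => LinMap.ext (funext fun x => g.2.map_add _ _))
     (fun s f => LinMap.ext rfl) α.2⟩

theorem sHomMap_apply {M N : Type u} [AddCommGroup M] [AddCommGroup N] [LMod R M]
    [LMod R N] (g : LinMap R M N) (α : SHom R S P M) (x : P) :
    ((sHomMap g α).1).1 x = g.1 (α.1.1 x) := rfl

theorem sHomMap_add {M N : Type u} [AddCommGroup M] [AddCommGroup N] [LMod R M]
    [LMod R N] (g : LinMap R M N) (α β : SHom R S P M) :
    sHomMap g (α + β) = sHomMap g α + sHomMap g β :=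
  Subtype.ext (LinMap.ext (funext fun x =>
    show g.1 (α.1.1 x + β.1.1 x) = g.1 (α.1.1 x) + g.1 (β.1.1 x) from g.2.map_add _ _))

theorem sHomMap_smul {M N : Type u} [AddCommGroup M] [AddCommGroup N] [LMod R M]
    [LMod R N] (g : LinMap R M N) (s : S) (α : SHom R S P M) :
    sHomMap g (s • α) = s • sHomMap g α :=
  Subtype.ext (LinMap.ext (funext fun x => rfl))

/-- `SHom_R(P,g)` as a homomorphism of `S`-modules. -/
def sHomLin {M N : Type u} [AddCommGroup M] [AddCommGroup N] [LMod R M] [LMod R N]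
    (g : LinMap R M N) : LinMap S (SHom R S P M) (SHom R S P N) :=
  ⟨sHomMap g, ⟨sHomMap_add g, fun s α => sHomMap_smul g s α⟩⟩

variable (R S P)

/-- The functor `SHom_R(P,−)` from unitary left `R`-modules to unitary left
`S`-modules. -/
def sHomF [HasLocalUnits S] : UMod.{u, u} R ⥤ UMod.{u, u} S where
  obj M := ⟨SHom R S P M.carrier, umax_unitary⟩
  map g := sHomLin g
  map_id M := LinMap.ext (funext fun α => Subtype.ext (LinMap.ext (funext fun x => rfl)))
  map_comp f g := LinMap.ext (funext fun α => Subtype.ext (LinMap.ext (funext fun x => rfl)))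

/-- `G_P = SHom_R(P,R)`, an `S`-`R`-bimodule. -/
abbrev GP : Type u := ↥(umax S (LinMap R P R))

/-- `RHom_S(G_P, N) = R·Hom_S(G_P, N)`, as a type. -/
abbrev RHomG (N : Type u) [AddCommGroup N] [LMod S N] : Type u :=
  ↥(umax R (LinMap S (GP R S P) N))

variable {R S P}

/-- The action of `RHom_S(G_P,−)` on a homomorphism of `S`-modules. -/
def rHomGMap {N N' : Type u} [AddCommGroup N] [AddCommGroup N'] [LMod S N] [LMod S N']
    (g : LinMap S N N') (α : RHomG R S P N) : RHomG R S P N' :=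
  ⟨⟨fun β => g.1 (α.1.1 β),
    ⟨fun x y => by rw [α.1.2.map_add, g.2.map_add],
     fun s x => by rw [α.1.2.map_smul, g.2.map_smul]⟩⟩,
   umax_mapsTo (C := R)
     (fun f => ⟨fun β => g.1 (f.1 β),
       ⟨fun x y => by rw [f.2.map_add, g.2.map_add],
        fun s x => by rw [f.2.map_smul, g.2.map_smul]⟩⟩)
     (fun f f' => LinMap.ext (funext fun β => g.2.map_add _ _))
     (fun r f => LinMap.ext rfl) α.2⟩

variable (R S P)

/-- The functor `RHom_S(G_P,−)` from unitary left `S`-modules to unitary left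
`R`-modules. -/
def rHomGF [HasLocalUnits R] : UMod.{u, u} S ⥤ UMod.{u, u} R where
  obj N := ⟨RHomG R S P N.carrier, umax_unitary⟩
  map g := ⟨rHomGMap g,
    ⟨fun α β => Subtype.ext (LinMap.ext (funext fun x =>
       show g.1 (α.1.1 x + β.1.1 x) = g.1 (α.1.1 x) + g.1 (β.1.1 x) from g.2.map_add _ _)),
     fun r α => Subtype.ext (LinMap.ext (funext fun x => rfl))⟩⟩
  map_id N := LinMap.ext (funext fun α => Subtype.ext (LinMap.ext (funext fun x => rfl)))
  map_comp f g := LinMap.ext (funext fun α => Subtype.ext (LinMap.ext (funext fun x => rfl)))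

variable {R S P}

/-- The inner component of the evaluation map `γ`: for `n ∈ N` and
`β ∈ Hom_R(P,R)`, the homomorphism `P → N`, `x ↦ (x)β·n`. -/
def gammaInner {N : Type u} [AddCommGroup N] [LMod R N] (n : N) (β : LinMap R P R) :
    LinMap R P N :=
  ⟨fun x => (β.1 x) • n,
   ⟨fun x y => by rw [β.2.map_add, LMod.add_smul'],
    fun r x => by rw [β.2.map_smul, NonUnitalRing.smul_def, LMod.mul_smul']⟩⟩

theorem gammaInner_mem {N : Type u} [AddCommGroup N] [LMod R N] (n : N)
    {β : LinMap R P R} (hβ : β ∈ umax S (LinMap R P R)) :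
    gammaInner n β ∈ umax S (LinMap R P N) :=
  umax_mapsTo (C := S) (fun β => gammaInner n β)
    (fun β β' => LinMap.ext (funext fun x => LMod.add_smul' _ _ _))
    (fun s β => LinMap.ext rfl) hβ

variable (R S P)

/-- The evaluation map `γ_N : N → RHom_S(G_P, SHom_R(P,N))` (before checking that
its values lie in the unitary part `R·Hom_S(G_P, SHom_R(P,N))`):
`n ↦ (β ↦ (x ↦ (x)β·n))`. -/
def gammaFun (N : Type u) [AddCommGroup N] [LMod R N] (n : N) :
    LinMap S (GP R S P) (SHom R S P N) :=
  ⟨fun β => ⟨gammaInner n β.1, gammaInner_mem n β.2⟩,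
   ⟨fun β β' => Subtype.ext (LinMap.ext (funext fun x => LMod.add_smul' _ _ _)),
    fun s β => Subtype.ext (LinMap.ext rfl)⟩⟩

/-- The `s`-trace `sTr(P,M) = Σ_{g ∈ SHom_R(P,M)} Im g` of `P` in `M`. -/
def sTrSub (M : Type u) [AddCommGroup M] [LMod R M] : AddSubgroup M :=
  AddSubgroup.closure {m : M | ∃ f : LinMap R P M, f ∈ umax S (LinMap R P M) ∧ ∃ x : P, m = f.1 x}

/-- `st_P(M) = 0`: the only `R`-submodule `K ⊆ M` with `SHom_R(P,K) = 0` is the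
zero submodule (equivalently, the sum of all such submodules is zero). -/
def stPZero (M : Type u) [AddCommGroup M] [LMod R M] : Prop :=
  ∀ K : AddSubgroup M, (∀ (r : R) (x : M), x ∈ K → r • x ∈ K) →
    (∀ (s : S) (f : LinMap R P M), (∀ x : P, f.1 x ∈ K) → s • f = 0) →
    ∀ m ∈ K, m = 0

/-- `SHom_R(P,X) = 0`. -/
def sHomZero (X : Type u) [AddCommGroup X] [LMod R X] : Prop :=
  ∀ f : LinMap R P X, f ∈ umax S (LinMap R P X) → f = 0

end shom
/-! ### Bimodules, dual hom functors, reflexivity, Morita duality bimodules,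
finiteness conditions -/

section bimod

variable (R S : Type u) [NonUnitalRing R] [NonUnitalRing S]

/-- A bundled `R`-`S`-bimodule over non-unital rings. -/
structure BimodLU : Type (u + 1) where
  carrier : Type u
  [grp : AddCommGroup carrier]
  [lmod : LMod R carrier]
  [rmod : LMod Sᵐᵒᵖ carrier]
  [comm : SMulCommClass R Sᵐᵒᵖ carrier]
  [comm' : SMulCommClass Sᵐᵒᵖ R carrier]

attribute [instance] BimodLU.grp BimodLU.lmod BimodLU.rmod BimodLU.comm BimodLU.comm'

variable (U : Type u) [AddCommGroup U] [LMod R U] [LMod Sᵐᵒᵖ U] [SMulCommClass R Sᵐᵒᵖ U]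
  [SMulCommClass Sᵐᵒᵖ R U]

/-- The canonical map `μ : S → End_R(U)`, `s ↦ (x ↦ x·s)`. -/
def muMap (s : S) : LinMap R U U :=
  ⟨fun x => op s • x,
   ⟨fun x y => LMod.smul_add' (op s) x y, fun r x => (smul_comm r (op s) x).symm⟩⟩

/-- The canonical map `λ : R → End_S(U)`, `r ↦ (x ↦ r·x)`. -/
def lambdaMap (r : R) : LinMap Sᵐᵒᵖ U U :=
  ⟨fun x => r • x,
   ⟨fun x y => LMod.smul_add' r x y, fun s x => smul_comm r s x⟩⟩

/-- `Hom_R(M,U)S`, the largest unitary right `S`-submodule of `Hom_R(M,U)`,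
as a type (a right `S`-module, i.e. a left `Sᵐᵒᵖ`-module). -/
abbrev DHomL (M : Type u) [AddCommGroup M] [LMod R M] : Type u :=
  ↥(umax Sᵐᵒᵖ (LinMap R M U))

/-- `RHom_S(N,U)`, the largest unitary left `R`-submodule of `Hom_S(N,U)`
for a right `S`-module `N`, as a type. -/
abbrev DHomR (N : Type u) [AddCommGroup N] [LMod Sᵐᵒᵖ N] : Type u :=
  ↥(umax R (LinMap Sᵐᵒᵖ N U))

variable {R S U}

/-- Action of the contravariant functor `Hom_R(−,U)S` on morphisms
(precomposition). -/
def dHomLMap {M N : Type u} [AddCommGroup M] [AddCommGroup N] [LMod R M] [LMod R N]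
    (f : LinMap R M N) (α : DHomL R S U N) : DHomL R S U M :=
  ⟨⟨fun x => α.1.1 (f.1 x),
    ⟨fun x y => by rw [f.2.map_add, α.1.2.map_add],
     fun r x => by rw [f.2.map_smul, α.1.2.map_smul]⟩⟩,
   umax_mapsTo (C := Sᵐᵒᵖ)
     (fun g => ⟨fun x => g.1 (f.1 x),
       ⟨fun x y => by rw [f.2.map_add, g.2.map_add],
        fun r x => by rw [f.2.map_smul, g.2.map_smul]⟩⟩)
     (fun g g' => LinMap.ext rfl) (fun s g => LinMap.ext rfl) α.2⟩

/-- Action of the contravariant functor `RHom_S(−,U)` on morphisms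
(precomposition). -/
def dHomRMap {M N : Type u} [AddCommGroup M] [AddCommGroup N] [LMod Sᵐᵒᵖ M]
    [LMod Sᵐᵒᵖ N] (f : LinMap Sᵐᵒᵖ M N) (α : DHomR R S U N) : DHomR R S U M :=
  ⟨⟨fun x => α.1.1 (f.1 x),
    ⟨fun x y => by rw [f.2.map_add, α.1.2.map_add],
     fun s x => by rw [f.2.map_smul, α.1.2.map_smul]⟩⟩,
   umax_mapsTo (C := R)
     (fun g => ⟨fun x => g.1 (f.1 x),
       ⟨fun x y => by rw [f.2.map_add, g.2.map_add],
        fun s x => by rw [f.2.map_smul, g.2.map_smul]⟩⟩)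
     (fun g g' => LinMap.ext rfl) (fun r g => LinMap.ext rfl) α.2⟩

variable (R S U)

/-- The contravariant functor `Hom_R(−,U)S` from unitary left `R`-modules to
unitary right `S`-modules. -/
def dualL [HasLocalUnits S] : (UMod.{u, u} R)ᵒᵖ ⥤ UMod.{u, u} Sᵐᵒᵖ where
  obj M := ⟨DHomL R S U M.unop.carrier, umax_unitary⟩
  map f := ⟨dHomLMap f.unop,
    ⟨fun α β => Subtype.ext (LinMap.ext (funext fun x => rfl)),
     fun s α => Subtype.ext (LinMap.ext (funext fun x => rfl))⟩⟩
  map_id M := LinMap.ext (funext fun α => Subtype.ext (LinMap.ext (funext fun x => rfl)))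
  map_comp f g := LinMap.ext (funext fun α => Subtype.ext (LinMap.ext (funext fun x => rfl)))

/-- The contravariant functor `RHom_S(−,U)` from unitary right `S`-modules to
unitary left `R`-modules. -/
def dualR [HasLocalUnits R] : (UMod.{u, u} Sᵐᵒᵖ)ᵒᵖ ⥤ UMod.{u, u} R where
  obj N := ⟨DHomR R S U N.unop.carrier, umax_unitary⟩
  map f := ⟨dHomRMap f.unop,
    ⟨fun α β => Subtype.ext (LinMap.ext (funext fun x => rfl)),
     fun r α => Subtype.ext (LinMap.ext (funext fun x => rfl))⟩⟩
  map_id N := LinMap.ext (funext fun α => Subtype.ext (LinMap.ext (funext fun x => rfl)))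
  map_comp f g := LinMap.ext (funext fun α => Subtype.ext (LinMap.ext (funext fun x => rfl)))

/-- The underlying function of the evaluation map
`φ_X : X → RHom_S(Hom_R(X,U)S, U)`, `(x)φ_X : β ↦ (x)β`. -/
def evalFunL (X : Type u) [AddCommGroup X] [LMod R X] (x : X) :
    LinMap Sᵐᵒᵖ (DHomL R S U X) U :=
  ⟨fun β => β.1.1 x, ⟨fun β β' => rfl, fun s β => rfl⟩⟩

/-- A unitary left `R`-module `X` is `U`-reflexive: the evaluation map
`φ_X : X → RHom_S(Hom_R(X,U)S, U)` is an isomorphism. -/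
def IsLReflexive (X : Type u) [AddCommGroup X] [LMod R X] : Prop :=
  ∃ h : ∀ x : X, evalFunL R S U X x ∈ umax R (LinMap Sᵐᵒᵖ (DHomL R S U X) U),
    Function.Bijective (fun x : X => (⟨evalFunL R S U X x, h x⟩ : DHomR R S U (DHomL R S U X)))

/-- The underlying function of the evaluation map
`ψ_Y : Y → Hom_R(RHom_S(Y,U),U)S`, `ψ_Y(y) : α ↦ α(y)`. -/
def evalFunR (Y : Type u) [AddCommGroup Y] [LMod Sᵐᵒᵖ Y] (y : Y) :
    LinMap R (DHomR R S U Y) U :=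
  ⟨fun α => α.1.1 y, ⟨fun α α' => rfl, fun r α => rfl⟩⟩

/-- A unitary right `S`-module `Y` is `U`-reflexive: the evaluation map
`ψ_Y : Y → Hom_R(RHom_S(Y,U),U)S` is an isomorphism. -/
def IsRReflexive (Y : Type u) [AddCommGroup Y] [LMod Sᵐᵒᵖ Y] : Prop :=
  ∃ h : ∀ y : Y, evalFunR R S U Y y ∈ umax Sᵐᵒᵖ (LinMap R (DHomR R S U Y) U),
    Function.Bijective (fun y : Y => (⟨evalFunR R S U Y y, h y⟩ : DHomL R S U (DHomR R S U Y)))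

/-- Properties (I) and (II) of a Morita duality bimodule: `U` is the direct
limit of a split direct system of finitely generated injective unitary left
`R`-modules whose members form a cogenerating set for the category of unitary
left `R`-modules, and `μ : S → End_R(U)` is a monomorphism whose image is
exactly the set of endomorphisms factoring through one of the induced
projections. -/
def SatisfiesI_II : Prop :=
  ∃ (ι : Type u) (rel : ι → ι → Prop),
    (∀ i, rel i i) ∧ (∀ {i j k}, rel i j → rel j k → rel i k) ∧
    Nonempty ι ∧ (∀ i j, ∃ k, rel i k ∧ rel j k) ∧
    ∃ (D : SplitSystem.{u, u} R ι rel) (c : LimitCocone R D U)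
      (proj : ∀ i, LinMap R U (D.obj i).carrier),
      (∀ i, IsFG R (D.obj i).carrier ∧ CategoryTheory.Injective (D.obj i)) ∧
      IsCogenSet R {M | ∃ i, M = D.obj i} ∧
      (∀ i (x : (D.obj i).carrier), (proj i).1 ((c.incl i).1 x) = x) ∧
      (∀ {i j} (h : rel i j) (x : U), (D.split h).1 ((proj j).1 x) = (proj i).1 x) ∧
      Function.Injective (muMap R S U) ∧
      Set.range (muMap R S U) =
        {g : LinMap R U U | ∃ (i : ι) (γ : LinMap R (D.obj i).carrier U),
          g.1 = fun x => γ.1 ((proj i).1 x)}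

/-- Properties (III) and (IV) of a Morita duality bimodule (the right-module
side, dual to (I) and (II)). -/
def SatisfiesIII_IV : Prop :=
  ∃ (ι : Type u) (rel : ι → ι → Prop),
    (∀ i, rel i i) ∧ (∀ {i j k}, rel i j → rel j k → rel i k) ∧
    Nonempty ι ∧ (∀ i j, ∃ k, rel i k ∧ rel j k) ∧
    ∃ (D : SplitSystem.{u, u} Sᵐᵒᵖ ι rel) (c : LimitCocone Sᵐᵒᵖ D U)
      (proj : ∀ i, LinMap Sᵐᵒᵖ U (D.obj i).carrier),
      (∀ i, IsFG Sᵐᵒᵖ (D.obj i).carrier ∧ CategoryTheory.Injective (D.obj i)) ∧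
      IsCogenSet Sᵐᵒᵖ {M | ∃ i, M = D.obj i} ∧
      (∀ i (x : (D.obj i).carrier), (proj i).1 ((c.incl i).1 x) = x) ∧
      (∀ {i j} (h : rel i j) (x : U), (D.split h).1 ((proj j).1 x) = (proj i).1 x) ∧
      Function.Injective (lambdaMap R S U) ∧
      Set.range (lambdaMap R S U) =
        {g : LinMap Sᵐᵒᵖ U U | ∃ (i : ι) (γ : LinMap Sᵐᵒᵖ (D.obj i).carrier U),
          g.1 = fun x => γ.1 ((proj i).1 x)}

/-- A Morita duality `R`-`S`-bimodule. -/
def IsMoritaDualityBimod : Prop :=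
  IsUnitary R U ∧ IsUnitary Sᵐᵒᵖ U ∧ SatisfiesI_II R S U ∧ SatisfiesIII_IV R S U

end bimod

section cats

variable (R : Type u) [NonUnitalRing R]

/-- The category of finitely generated unitary left `R`-modules. -/
abbrev FGMod := CategoryTheory.ObjectProperty.FullSubcategory (fun M : UMod.{u, u} R => IsFG R M.carrier)

/-- The category of finitely generated injective unitary left `R`-modules. -/
abbrev InjFGMod := CategoryTheory.ObjectProperty.FullSubcategory
  (fun M : UMod.{u, u} R => IsFG R M.carrier ∧ CategoryTheory.Injective M)

/-- The category of finitely generated projective unitary left `R`-modules. -/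
abbrev ProjFGMod := CategoryTheory.ObjectProperty.FullSubcategory
  (fun M : UMod.{u, u} R => IsFG R M.carrier ∧ CategoryTheory.Projective M)

/-- There is a duality (an additive contravariant equivalence) between the
categories of finitely generated unitary left `R`-modules and finitely
generated unitary right `S`-modules. -/
def ExistsFGDuality (R S : Type u) [NonUnitalRing R] [NonUnitalRing S] : Prop :=
  ∃ F : (FGMod R)ᵒᵖ ⥤ FGMod Sᵐᵒᵖ, F.Additive ∧ F.IsEquivalence

/-- Bundled ring with local units. -/
structure RingLU : Type (u + 1) where
  carrier : Type u
  [ring : NonUnitalRing carrier]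
  [lu : HasLocalUnits carrier]

attribute [instance] RingLU.ring RingLU.lu

/-- A ring with local units is left Morita if there is a ring `R'` with local
units and a duality from finitely generated unitary left `R`-modules to
finitely generated unitary right `R'`-modules. -/
def IsLeftMorita : Prop :=
  ∃ R' : RingLU.{u}, ExistsFGDuality R R'.carrier

/-- `R` is left locally finite: every finitely generated unitary left
`R`-module has finite length (equivalently, the lengths of chains of
submodules of such a module are bounded). -/
def IsLeftLocallyFinite : Prop :=
  ∀ (M : Type u) [AddCommGroup M] [LMod R M], IsUnitary R M → IsFG R M →
    ∃ n : ℕ, ∀ c : Fin (n + 1) → AddSubgroup M,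
      (∀ i (r : R) x, x ∈ c i → r • x ∈ c i) →
      ¬(∀ i : Fin n, c i.castSucc < c i.succ)

/-- `R` is left locally noetherian: every finitely generated unitary left
`R`-module is noetherian. -/
def IsLeftLocallyNoetherian : Prop :=
  ∀ (M : Type u) [AddCommGroup M] [LMod R M], IsUnitary R M → IsFG R M →
    ∀ c : ℕ → AddSubgroup M, (∀ i (r : R) x, x ∈ c i → r • x ∈ c i) →
      (∀ i, c i ≤ c (i + 1)) → ∃ n, ∀ m, n ≤ m → c m = c n

end cats

section principal

variable (R : Type u) [NonUnitalRing R]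

/-- The principal left ideal `Re` of a non-unital ring, for an element `e`. -/
def principalLeft (e : R) : AddSubgroup R where
  carrier := {y : R | ∃ r : R, y = r * e}
  add_mem' := by
    rintro a b ⟨r, hr⟩ ⟨s, hs⟩
    exact ⟨r + s, by rw [hr, hs, add_mul]⟩
  zero_mem' := ⟨0, by rw [zero_mul]⟩
  neg_mem' := by
    rintro a ⟨r, hr⟩
    exact ⟨-r, by rw [hr, neg_mul]⟩

instance (e : R) : LMod R ↥(principalLeft R e) where
  smul r y := ⟨r * y.1, by obtain ⟨s, hs⟩ := y.2; exact ⟨r * s, by rw [hs, mul_assoc]⟩⟩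
  smul_add' r m n := Subtype.ext (mul_add r m.1 n.1)
  add_smul' r s m := Subtype.ext (add_mul r s m.1)
  mul_smul' r s m := Subtype.ext (mul_assoc r s m.1)

/-- The principal right ideal `fS` of a non-unital ring, as a right module
(left module over the opposite ring). -/
def principalRight (f : R) : AddSubgroup R where
  carrier := {y : R | ∃ s : R, y = f * s}
  add_mem' := by
    rintro a b ⟨r, hr⟩ ⟨s, hs⟩
    exact ⟨r + s, by rw [hr, hs, mul_add]⟩
  zero_mem' := ⟨0, by rw [mul_zero]⟩
  neg_mem' := by
    rintro a ⟨r, hr⟩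
    exact ⟨-r, by rw [hr, mul_neg]⟩

instance (f : R) : LMod Rᵐᵒᵖ ↥(principalRight R f) where
  smul s y := ⟨y.1 * s.unop, by
    obtain ⟨t, ht⟩ := y.2; exact ⟨t * s.unop, by rw [ht, mul_assoc]⟩⟩
  smul_add' s m n := Subtype.ext (add_mul m.1 n.1 s.unop)
  add_smul' s t m := Subtype.ext (mul_add m.1 s.unop t.unop)
  mul_smul' s t m := Subtype.ext (mul_assoc m.1 t.unop s.unop).symm

end principal

section restr

variable (R S : Type u) [NonUnitalRing R] [NonUnitalRing S] [HasLocalUnits R] [HasLocalUnits S]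
variable (U : Type u) [AddCommGroup U] [LMod R U] [LMod Sᵐᵒᵖ U] [SMulCommClass R Sᵐᵒᵖ U]
  [SMulCommClass Sᵐᵒᵖ R U]

/-- The restriction of the contravariant functor `Hom_R(−,U)S` to finitely
generated modules, given that it preserves finite generation. -/
def dualLRestr (hFG : ∀ X : UMod.{u, u} R, IsFG R X.carrier →
    IsFG Sᵐᵒᵖ ((dualL R S U).obj (Opposite.op X)).carrier) :
    (FGMod R)ᵒᵖ ⥤ FGMod Sᵐᵒᵖ :=
  CategoryTheory.ObjectProperty.lift _
    ((CategoryTheory.ObjectProperty.ι _).op ⋙ dualL R S U)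
    (fun X => hFG X.unop.obj X.unop.property)

/-- The restriction of the contravariant functor `RHom_S(−,U)` to finitely
generated modules, given that it preserves finite generation. -/
def dualRRestr (hFG : ∀ Y : UMod.{u, u} Sᵐᵒᵖ, IsFG Sᵐᵒᵖ Y.carrier →
    IsFG R ((dualR R S U).obj (Opposite.op Y)).carrier) :
    (FGMod Sᵐᵒᵖ)ᵒᵖ ⥤ FGMod R :=
  CategoryTheory.ObjectProperty.lift _
    ((CategoryTheory.ObjectProperty.ι _).op ⋙ dualR R S U)
    (fun Y => hFG Y.unop.obj Y.unop.property)

end restr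
/-! ### Direct sums of modules over non-unital rings -/

section dfinsupp

variable {R : Type u} [NonUnitalRing R] {ι : Type v} {β : ι → Type w}
  [∀ i, AddCommGroup (β i)] [∀ i, LMod R (β i)]

/-- Pointwise scalar action on a direct sum. -/
def dfinsuppSMul (r : R) (f : Π₀ i, β i) : Π₀ i, β i :=
  f.mapRange (fun _ x => r • x) (fun _ => LMod.smul_zero' r)

theorem dfinsuppSMul_apply (r : R) (f : Π₀ i, β i) (i : ι) :
    dfinsuppSMul r f i = r • f i := DFinsupp.mapRange_apply _ _ f i

instance DFinsupp.instLMod : LMod R (Π₀ i, β i) where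
  smul := dfinsuppSMul
  smul_add' r f g := by
    ext i
    show dfinsuppSMul r (f + g) i = (dfinsuppSMul r f + dfinsuppSMul r g) i
    rw [DFinsupp.add_apply, dfinsuppSMul_apply, dfinsuppSMul_apply, dfinsuppSMul_apply,
      DFinsupp.add_apply]
    exact LMod.smul_add' r (f i) (g i)
  add_smul' r s f := by
    ext i
    show dfinsuppSMul (r + s) f i = (dfinsuppSMul r f + dfinsuppSMul s f) i
    rw [DFinsupp.add_apply, dfinsuppSMul_apply, dfinsuppSMul_apply, dfinsuppSMul_apply]
    exact LMod.add_smul' r s (f i)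
  mul_smul' r s f := by
    ext i
    show dfinsuppSMul (r * s) f i = dfinsuppSMul r (dfinsuppSMul s f) i
    rw [dfinsuppSMul_apply, dfinsuppSMul_apply, dfinsuppSMul_apply]
    exact LMod.mul_smul' r s (f i)

@[simp] theorem DFinsupp.lmod_smul_apply (r : R) (f : Π₀ i, β i) (i : ι) :
    (r • f) i = r • f i := dfinsuppSMul_apply r f i

end dfinsupp
/-! ### Miscellaneous helpers: submodule stability, `Pf`, traces, sums -/

section extra

variable {R : Type u} [NonUnitalRing R] {M : Type v} [AddCommGroup M] [LMod R M]

theorem closure_smul_stable {s : Set M}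
    (h : ∀ (r : R) (x : M), x ∈ s → r • x ∈ AddSubgroup.closure s) (r : R) {x : M}
    (hx : x ∈ AddSubgroup.closure s) : r • x ∈ AddSubgroup.closure s := by
  induction hx using AddSubgroup.closure_induction with
  | mem y hy => exact h r y hy
  | zero => rw [LMod.smul_zero']; exact AddSubgroup.zero_mem _
  | add y z hy hz ihy ihz => rw [LMod.smul_add']; exact AddSubgroup.add_mem _ ihy ihz
  | neg y hy ihy => rw [LMod.smul_neg']; exact AddSubgroup.neg_mem _ ihy

end extra

section pe

variable (R S : Type u) [NonUnitalRing R] [NonUnitalRing S]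
variable (P : Type u) [AddCommGroup P] [LMod R P] [LMod Sᵐᵒᵖ P] [SMulCommClass R Sᵐᵒᵖ P]

/-- The submodule `Pf = {x·f | x ∈ P}` of `P`, for `f ∈ S`. -/
def peSub (f : S) : AddSubgroup P where
  carrier := Set.range (fun x : P => (op f : Sᵐᵒᵖ) • x)
  add_mem' := by
    rintro a b ⟨x, rfl⟩ ⟨y, rfl⟩
    exact ⟨x + y, LMod.smul_add' (op f) x y⟩
  zero_mem' := ⟨0, LMod.smul_zero' _⟩
  neg_mem' := by
    rintro a ⟨x, rfl⟩
    exact ⟨-x, LMod.smul_neg' (op f) x⟩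

instance (f : S) : LMod R ↥(peSub S P f) where
  smul r y := ⟨r • y.1, by
    obtain ⟨x, hx⟩ := y.2
    exact ⟨r • x, by rw [← hx, smul_comm]⟩⟩
  smul_add' r m n := Subtype.ext (LMod.smul_add' r m.1 n.1)
  add_smul' r s m := Subtype.ext (LMod.add_smul' r s m.1)
  mul_smul' r s m := Subtype.ext (LMod.mul_smul' r s m.1)

variable {R S P} in
theorem sTrSub_smul_stable {M : Type u} [AddCommGroup M] [LMod R M] (r : R) {m : M}
    (hm : m ∈ sTrSub R S P M) : r • m ∈ sTrSub R S P M := by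
  refine closure_smul_stable (fun r' x hx => ?_) r hm
  obtain ⟨g, hg, y, rfl⟩ := hx
  exact AddSubgroup.subset_closure ⟨g, hg, r' • y, (g.2.map_smul r' y).symm⟩

instance (M : Type u) [AddCommGroup M] [LMod R M] : LMod R ↥(sTrSub R S P M) where
  smul r y := ⟨r • y.1, sTrSub_smul_stable r y.2⟩
  smul_add' r m n := Subtype.ext (LMod.smul_add' r m.1 n.1)
  add_smul' r s m := Subtype.ext (LMod.add_smul' r s m.1)
  mul_smul' r s m := Subtype.ext (LMod.mul_smul' r s m.1)

end pe

section sum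

/-- Summation over a direct sum against a family of additive maps
(the canonical map `⊕_I M_i → N`). -/
noncomputable def dfinsuppSum {ι : Type u} {β : ι → Type v} [∀ i, AddCommGroup (β i)]
    {γ : Type w} [AddCommGroup γ] (f : ∀ i, β i →+ γ) (x : Π₀ i, β i) : γ :=
  letI := Classical.decEq ι
  DFinsupp.sumAddHom f x

end sum

/-! Evaluation at `e` identifies `Hom_R(Re, U)` with `eU`: every `β` is `y ↦ y·β(e)`, and
`u ↦ (y ↦ y·u)` is `S`-linear, so all these maps already lie in `Hom_R(Re, U)S` because `U` is
unitary. Hence `φ(x)` determines `λ(x)`, and `φ` is injective with `λ`. A functional `F` on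
`Hom_R(Re, U)S` gives the `S`-endomorphism `g : u ↦ F(y ↦ y·u)` of `U` with `g = λ(e) g`, so
`g = λ(r)` by the ideal condition on `Im λ`, and then `F = φ(re)`. Part (b) is the same argument
for the ring `Sᵒᵖ` acting on `fS`, with `R` in the role of `S`. -/

def LinMap.comp {R : Type u} [NonUnitalRing R] {M : Type v} {N : Type w} {K : Type*}
    [AddCommGroup M] [AddCommGroup N] [AddCommGroup K] [LMod R M] [LMod R N] [LMod R K]
    (g : LinMap R N K) (f : LinMap R M N) : LinMap R M K :=
  ⟨fun x => g.1 (f.1 x),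
    ⟨fun x y => by rw [f.2.map_add, g.2.map_add], fun r x => by rw [f.2.map_smul, g.2.map_smul]⟩⟩

section reflexive

variable (A B : Type u) [NonUnitalRing A] [NonUnitalRing B]
  (U : Type w) [AddCommGroup U] [LMod A U] [LMod B U] [SMulCommClass A B U]

def smulEnd (a : A) : LinMap B U U :=
  ⟨fun x => a • x, ⟨fun x y => LMod.smul_add' a x y, fun b x => smul_comm a b x⟩⟩

abbrev UnitaryDual (X : Type v) [AddCommGroup X] [LMod A X] : Type (max v w) :=
  ↥(umax B (LinMap A X U))

def evalDual (X : Type v) [AddCommGroup X] [LMod A X] (x : X) :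
    LinMap B (UnitaryDual A B U X) U :=
  ⟨fun β => β.1.1 x, ⟨fun _ _ => rfl, fun _ _ => rfl⟩⟩

/-- `IsLReflexive R S U` is `IsUReflexive R Sᵐᵒᵖ U` and `IsRReflexive R S U` is
`IsUReflexive Sᵐᵒᵖ R U`. -/
def IsUReflexive [SMulCommClass B A U] (X : Type v) [AddCommGroup X] [LMod A X] : Prop :=
  ∃ h : ∀ x : X, evalDual A B U X x ∈ umax A (LinMap B (UnitaryDual A B U X) U),
    Function.Bijective (fun x : X =>
      (⟨evalDual A B U X x, h x⟩ : ↥(umax A (LinMap B (UnitaryDual A B U X) U))))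

variable {A B U} {X : Type v} [AddCommGroup X] [LMod A X]

/-- `c` identifies `X` with the principal left ideal `A·(c x₀)`, whose generator `c x₀` is
then idempotent. -/
def IsCoordinate (c : LinMap A X A) (x₀ : X) : Prop :=
  ∀ x, c.1 x • x₀ = x

def LinMap.smulRight (c : LinMap A X A) (u : U) : LinMap A X U :=
  ⟨fun x => c.1 x • u,
    ⟨fun x y => by rw [c.2.map_add, LMod.add_smul'],
     fun a x => by rw [c.2.map_smul, NonUnitalRing.smul_def, LMod.mul_smul']⟩⟩

def LinMap.smulRightLin (c : LinMap A X A) : LinMap B U (LinMap A X U) :=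
  ⟨c.smulRight, ⟨fun u v => LinMap.ext (funext fun x => LMod.smul_add' (c.1 x) u v),
    fun b u => LinMap.ext (funext fun x => smul_comm (c.1 x) b u)⟩⟩

theorem LinMap.smulRight_mem_umax (hU : IsUnitary B U) (c : LinMap A X A) (u : U) :
    c.smulRight u ∈ umax B (LinMap A X U) :=
  umax_mapsTo (smulRightLin (B := B) c).1 (smulRightLin c).2.map_add
    (smulRightLin c).2.map_smul (hU u)

def LinMap.smulRightDual (hU : IsUnitary B U) (c : LinMap A X A) :
    LinMap B U (UnitaryDual A B U X) :=
  ⟨fun u => ⟨c.smulRight u, c.smulRight_mem_umax hU u⟩,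
    ⟨fun u v => Subtype.ext ((smulRightLin (B := B) c).2.map_add u v),
     fun b u => Subtype.ext ((smulRightLin c).2.map_smul b u)⟩⟩

namespace IsCoordinate

variable {c : LinMap A X A} {x₀ : X}

theorem apply_mul_apply_base (hc : IsCoordinate c x₀) (x : X) : c.1 x * c.1 x₀ = c.1 x := by
  conv_rhs => rw [← hc x]
  exact (c.2.map_smul _ _).symm

theorem smulRight_apply_base_smul (hc : IsCoordinate c x₀) (u : U) :
    c.smulRight (c.1 x₀ • u) = c.smulRight u :=
  LinMap.ext (funext fun x => by
    show c.1 x • (c.1 x₀ • u) = c.1 x • u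
    rw [← LMod.mul_smul', hc.apply_mul_apply_base])

theorem eq_smulRight (hc : IsCoordinate c x₀) (β : LinMap A X U) : β = c.smulRight (β.1 x₀) :=
  LinMap.ext (funext fun x => by
    conv_lhs => rw [← hc x]
    exact β.2.map_smul _ _)

theorem evalDual_eq_smul [SMulCommClass B A U] (hc : IsCoordinate c x₀) (x : X) :
    evalDual A B U X x = c.1 x • evalDual A B U X x₀ :=
  LinMap.ext (funext fun β => by
    show β.1.1 x = c.1 x • β.1.1 x₀
    conv_lhs => rw [← hc x]
    exact β.1.2.map_smul _ _)

theorem evalDual_mem_umax [SMulCommClass B A U] (hc : IsCoordinate c x₀) (x : X) :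
    evalDual A B U X x ∈ umax A (LinMap B (UnitaryDual A B U X) U) := by
  rw [hc.evalDual_eq_smul x]
  exact smul_mem_umax _ _

theorem evalDual_injective (hU : IsUnitary B U) (hinj : Function.Injective (smulEnd A B U))
    (hc : IsCoordinate c x₀) : Function.Injective (evalDual A B U X) := by
  intro x x' h
  have hcoeff : smulEnd A B U (c.1 x) = smulEnd A B U (c.1 x') :=
    LinMap.ext (funext fun u => congrFun (congrArg Subtype.val h) ((c.smulRightDual hU).1 u))
  calc x = c.1 x • x₀ := (hc x).symm
    _ = c.1 x' • x₀ := by rw [hinj hcoeff]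
    _ = x' := hc x'

theorem exists_evalDual_eq (hU : IsUnitary B U)
    (hideal : ∀ a g, smulEnd A B U a * g ∈ Set.range (smulEnd A B U))
    (hc : IsCoordinate c x₀) (F : LinMap B (UnitaryDual A B U X) U) :
    ∃ x, evalDual A B U X x = F := by
  set D := c.smulRightDual hU
  set g := F.comp D
  have hD : ∀ u, D.1 (c.1 x₀ • u) = D.1 u := fun u =>
    Subtype.ext (hc.smulRight_apply_base_smul u)
  have hg : smulEnd A B U (c.1 x₀) * g = g :=
    LinMap.ext (funext fun u => congrArg F.1 (hD u))
  obtain ⟨a, ha⟩ := hideal (c.1 x₀) g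
  rw [hg] at ha
  refine ⟨a • x₀, LinMap.ext (funext fun β => ?_)⟩
  have hβ : D.1 (β.1.1 x₀) = β := Subtype.ext (hc.eq_smulRight β.1).symm
  calc β.1.1 (a • x₀) = a • β.1.1 x₀ := β.1.2.map_smul a x₀
    _ = g.1 (β.1.1 x₀) := by rw [← ha]; rfl
    _ = F.1 β := congrArg F.1 hβ

theorem isUReflexive [SMulCommClass B A U] (hU : IsUnitary B U)
    (hinj : Function.Injective (smulEnd A B U))
    (hideal : ∀ a g, smulEnd A B U a * g ∈ Set.range (smulEnd A B U))
    (hc : IsCoordinate c x₀) : IsUReflexive A B U X :=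
  ⟨hc.evalDual_mem_umax, fun _ _ h => hc.evalDual_injective hU hinj (congrArg Subtype.val h),
    fun F => (hc.exists_evalDual_eq hU hideal F.1).imp fun _ hx => Subtype.ext hx⟩

end IsCoordinate

end reflexive

def principalLeft.subtype {R : Type u} [NonUnitalRing R] (e : R) :
    LinMap R ↥(principalLeft R e) R :=
  ⟨Subtype.val, ⟨fun _ _ => rfl, fun _ _ => rfl⟩⟩

theorem principalLeft.isCoordinate_subtype {R : Type u} [NonUnitalRing R] {e : R}
    (he : e * e = e) : IsCoordinate (principalLeft.subtype e) ⟨e, e, he.symm⟩ := by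
  rintro ⟨y, r, rfl⟩
  exact Subtype.ext (show r * e * e = r * e by rw [mul_assoc, he])

def principalRight.opSubtype {R : Type u} [NonUnitalRing R] (f : R) :
    LinMap Rᵐᵒᵖ ↥(principalRight R f) Rᵐᵒᵖ :=
  ⟨fun y => op y.1, ⟨fun _ _ => rfl, fun _ _ => rfl⟩⟩

theorem principalRight.isCoordinate_opSubtype {R : Type u} [NonUnitalRing R] {f : R}
    (hf : f * f = f) : IsCoordinate (principalRight.opSubtype f) ⟨f, f, hf.symm⟩ := by
  rintro ⟨y, s, rfl⟩
  exact Subtype.ext (show f * (f * s) = f * s by rw [← mul_assoc, hf])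

theorem principal_modules_reflexive_general
    (R S : Type u) [NonUnitalRing R] [NonUnitalRing S]
    (U : Type u) [AddCommGroup U] [LMod R U] [LMod Sᵐᵒᵖ U]
    [SMulCommClass R Sᵐᵒᵖ U] [SMulCommClass Sᵐᵒᵖ R U]
    (hUl : IsUnitary R U) (hUr : IsUnitary Sᵐᵒᵖ U) :
    -- (a):
    ((Function.Injective (lambdaMap R S U) ∧
      ((AddSubgroup.closure {h : LinMap Sᵐᵒᵖ U U |
          ∃ (r : R) (g : LinMap Sᵐᵒᵖ U U), h = lambdaMap R S U r * g} :
          AddSubgroup (LinMap Sᵐᵒᵖ U U)) : Set (LinMap Sᵐᵒᵖ U U)) =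
        Set.range (lambdaMap R S U)) →
      ∀ e : R, e * e = e → IsLReflexive R S U ↥(principalLeft R e)) ∧
    -- (b):
    ((Function.Injective (muMap R S U) ∧
      ((AddSubgroup.closure {h : LinMap R U U |
          ∃ (s : S) (g : LinMap R U U), h = muMap R S U s * g} :
          AddSubgroup (LinMap R U U)) : Set (LinMap R U U)) =
        Set.range (muMap R S U)) →
      ∀ f : S, f * f = f → IsRReflexive R S U ↥(principalRight S f)) := by
  refine ⟨fun ⟨hinj, him⟩ e he => ?_, fun ⟨hinj, him⟩ f hf => ?_⟩
  · exact (principalLeft.isCoordinate_subtype he).isUReflexive hUr hinj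
      fun r g => him ▸ AddSubgroup.subset_closure ⟨r, g, rfl⟩
  · refine (principalRight.isCoordinate_opSubtype hf).isUReflexive (A := Sᵐᵒᵖ) hUl
      (fun _ _ h => unop_injective (hinj h)) fun s g => ?_
    have hmem : muMap R S U s.unop * g ∈ Set.range (muMap R S U) :=
      him ▸ AddSubgroup.subset_closure ⟨s.unop, g, rfl⟩
    obtain ⟨t, ht⟩ := hmem
    exact ⟨op t, ht⟩

theorem principal_modules_reflexive
    (R S : Type u) [NonUnitalRing R] [NonUnitalRing S]
    [HasLocalUnits R] [HasLocalUnits S]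
    (U : Type u) [AddCommGroup U] [LMod R U] [LMod Sᵐᵒᵖ U]
    [SMulCommClass R Sᵐᵒᵖ U] [SMulCommClass Sᵐᵒᵖ R U]
    (hUl : IsUnitary R U) (hUr : IsUnitary Sᵐᵒᵖ U) :
    -- (a):
    ((Function.Injective (lambdaMap R S U) ∧
      ((AddSubgroup.closure {h : LinMap Sᵐᵒᵖ U U |
          ∃ (r : R) (g : LinMap Sᵐᵒᵖ U U), h = lambdaMap R S U r * g} :
          AddSubgroup (LinMap Sᵐᵒᵖ U U)) : Set (LinMap Sᵐᵒᵖ U U)) =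
        Set.range (lambdaMap R S U)) →
      ∀ e : R, e * e = e → IsLReflexive R S U ↥(principalLeft R e)) ∧
    -- (b):
    ((Function.Injective (muMap R S U) ∧
      ((AddSubgroup.closure {h : LinMap R U U |
          ∃ (s : S) (g : LinMap R U U), h = muMap R S U s * g} :
          AddSubgroup (LinMap R U U)) : Set (LinMap R U U)) =
        Set.range (muMap R S U)) →
      ∀ f : S, f * f = f → IsRReflexive R S U ↥(principalRight S f)) :=
  principal_modules_reflexive_general R S U hUl hUr
end

section
/- Let R and S be rings with local units and let U be a unitary R-S-bimodule. (a) If U has properties (I) and (II), then the contravariant functor Hom_R(−,U)S : RMod → ModS is exact. (b) If U has properties (III) and (IV), then the contravariant functor RHom_S(−,U) : ModS → RMod is exact. -/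
set_option linter.unusedVariables false

/-! ### Core: non-unital rings with local units, modules, homomorphisms, categories -/

universe u v w

open MulOpposite CategoryTheory

/-! Both functors are instances of `M ↦ C·Hom_{B₀}(M,U)`, acting by precomposition. Left
exactness is inherited from `Hom(−,U)`: every element of `C·H` is fixed by some `e ∈ C` (local
units), so a preimage `δ` of `β = e·β` can be replaced by `e·δ ∈ C·H`. For right exactness,
(II) (resp. (IV)) says that `e` acts on `U` through a map `U → I → U` with `I` injective, so
`β = e·β` factors through `I` and therefore extends along any monomorphism. -/

section umax

variable {C : Type u} [NonUnitalRing C] [HasLocalUnits C]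

theorem exists_smul_eq_self_of_mem_umax {W : Type v} [AddCommGroup W] [LMod C W] {w : W}
    (hw : w ∈ umax C W) : ∃ e : C, e • w = w := by
  classical
  obtain ⟨t, ht⟩ : ∃ t : Finset C, ∀ e : C, (∀ c ∈ t, e * c = c) → e • w = w := by
    induction hw using AddSubgroup.closure_induction with
    | mem x hx =>
      obtain ⟨c, y, rfl⟩ := hx
      exact ⟨{c}, fun e he => by rw [← LMod.mul_smul', he c (Finset.mem_singleton_self c)]⟩
    | zero => exact ⟨∅, fun e _ => LMod.smul_zero' e⟩
    | add x y _ _ hx hy =>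
      obtain ⟨t₁, h₁⟩ := hx
      obtain ⟨t₂, h₂⟩ := hy
      exact ⟨t₁ ∪ t₂, fun e he => by
        rw [LMod.smul_add', h₁ e fun c hc => he c (Finset.mem_union_left _ hc),
          h₂ e fun c hc => he c (Finset.mem_union_right _ hc)]⟩
    | neg x _ hx =>
      obtain ⟨t, h⟩ := hx
      exact ⟨t, fun e he => by rw [LMod.smul_neg', h e he]⟩
  obtain ⟨e, -, he⟩ := HasLocalUnits.exists_unit t
  exact ⟨e, ht e fun c hc => (he c hc).1⟩

theorem exists_mem_umax_eq_of_mem_range {H : Type v} {H' : Type w} [AddCommGroup H]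
    [AddCommGroup H'] [LMod C H] [LMod C H'] (T : H → H')
    (hT : ∀ (c : C) (x : H), T (c • x) = c • T x) {β : H'} (hβ : β ∈ umax C H')
    (hβT : β ∈ Set.range T) : ∃ δ ∈ umax C H, T δ = β := by
  obtain ⟨e, he⟩ := exists_smul_eq_self_of_mem_umax hβ
  obtain ⟨δ, rfl⟩ := hβT
  exact ⟨e • δ, smul_mem_umax e δ, by rw [hT, he]⟩

end umax

namespace LinMap

variable {R : Type u} [NonUnitalRing R] {M : Type v} {N : Type w} {P : Type*} {Q : Type*}
  [AddCommGroup M] [AddCommGroup N] [AddCommGroup P] [AddCommGroup Q]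
  [LMod R M] [LMod R N] [LMod R P] [LMod R Q]

def comp_s16 (g : LinMap R N P) (f : LinMap R M N) : LinMap R M P :=
  ⟨fun x => g.1 (f.1 x),
    ⟨fun x y => by rw [f.2.map_add, g.2.map_add], fun r x => by rw [f.2.map_smul, g.2.map_smul]⟩⟩

theorem exists_comp_eq_of_surjective_of_ker_le (g : LinMap R N P) (hg : Function.Surjective g.1)
    (α : LinMap R N Q) (hα : ∀ y, g.1 y = 0 → α.1 y = 0) : ∃ γ : LinMap R P Q, γ.comp_s16 g = α := by
  have hfiber : ∀ y y', g.1 y = g.1 y' → α.1 y = α.1 y' := by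
    intro y y' h
    have h' := hα (y + -y') (by rw [g.2.map_add, g.2.map_neg, h, add_neg_cancel])
    rwa [α.2.map_add, α.2.map_neg, add_neg_eq_zero] at h'
  let σ := Function.surjInv hg
  have hσ : ∀ z, g.1 (σ z) = z := Function.surjInv_eq hg
  refine ⟨⟨fun z => α.1 (σ z), ⟨fun z z' => ?_, fun r z => ?_⟩⟩, ext (funext fun y => ?_)⟩
  · rw [← α.2.map_add]
    exact hfiber _ _ (by rw [g.2.map_add, hσ, hσ, hσ])
  · rw [← α.2.map_smul]
    exact hfiber _ _ (by rw [g.2.map_smul, hσ, hσ])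
  · exact hfiber _ _ (hσ (g.1 y))

end LinMap

section umaxPrecomp

variable {B₀ C : Type u} [NonUnitalRing B₀] [NonUnitalRing C]
  {U : Type v} [AddCommGroup U] [LMod B₀ U] [LMod C U] [SMulCommClass B₀ C U]

variable (B₀ C U) in
def SMulFactorsThroughInjective : Prop :=
  ∀ c : C, ∃ (I : UMod.{u, v} B₀) (_ : CategoryTheory.Injective I)
    (p : LinMap B₀ U I.carrier) (γ : LinMap B₀ I.carrier U), ∀ x : U, c • x = γ.1 (p.1 x)

def umaxPrecomp {M N : Type v} [AddCommGroup M] [AddCommGroup N] [LMod B₀ M] [LMod B₀ N]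
    (f : LinMap B₀ M N) (α : ↥(umax C (LinMap B₀ N U))) : ↥(umax C (LinMap B₀ M U)) :=
  ⟨α.1.comp_s16 f, umax_mapsTo (fun β => β.comp_s16 f) (fun _ _ => rfl) (fun _ _ => rfl) α.2⟩

variable {M N P : Type v} [AddCommGroup M] [AddCommGroup N] [AddCommGroup P]
  [LMod B₀ M] [LMod B₀ N] [LMod B₀ P]

theorem umaxPrecomp_injective (g : LinMap B₀ N P) (hg : Function.Surjective g.1) :
    Function.Injective (umaxPrecomp (C := C) (U := U) g) := by
  intro α β h
  refine Subtype.ext (LinMap.ext (funext fun z => ?_))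
  obtain ⟨y, rfl⟩ := hg z
  exact congrFun (congrArg (fun δ => δ.1.1) h) y

theorem umaxPrecomp_eq_zero_iff [HasLocalUnits C] (f : LinMap B₀ M N) (g : LinMap B₀ N P)
    (hg : Function.Surjective g.1) (hker : ∀ y, g.1 y = 0 ↔ ∃ x, f.1 x = y)
    (β : ↥(umax C (LinMap B₀ N U))) :
    umaxPrecomp f β = 0 ↔ ∃ γ, umaxPrecomp (C := C) (U := U) g γ = β := by
  constructor
  · intro hβ
    obtain ⟨γ, hγ⟩ := g.exists_comp_eq_of_surjective_of_ker_le hg β.1 fun y hy => by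
      obtain ⟨x, rfl⟩ := (hker y).1 hy
      exact congrFun (congrArg (fun δ => δ.1.1) hβ) x
    obtain ⟨δ, hδ, hδγ⟩ :=
      exists_mem_umax_eq_of_mem_range (fun δ => δ.comp_s16 g) (fun _ _ => rfl) β.2 ⟨γ, hγ⟩
    exact ⟨⟨δ, hδ⟩, Subtype.ext hδγ⟩
  · rintro ⟨γ, rfl⟩
    refine Subtype.ext (LinMap.ext (funext fun x => ?_))
    show γ.1.1 (g.1 (f.1 x)) = 0
    rw [(hker _).2 ⟨x, rfl⟩, γ.1.2.map_zero]

theorem umaxPrecomp_surjective [HasLocalUnits C] (hU : SMulFactorsThroughInjective B₀ C U)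
    {A B : UMod.{u, v} B₀} (f : A ⟶ B) (hf : Function.Injective f.1) :
    Function.Surjective (umaxPrecomp (C := C) (U := U) f) := by
  intro β
  obtain ⟨e, he⟩ := exists_smul_eq_self_of_mem_umax β.2
  obtain ⟨I, _, p, γ, hpγ⟩ := hU e
  have : CategoryTheory.Mono f :=
    ⟨fun u v huv => LinMap.ext (funext fun x => hf (congrFun (congrArg Subtype.val huv) x))⟩
  let h : B ⟶ I := CategoryTheory.Injective.factorThru (p.comp_s16 β.1 : A ⟶ I) f
  have hfh : ∀ a, h.1 (f.1 a) = p.1 (β.1.1 a) := fun a =>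
    congrFun (congrArg Subtype.val (CategoryTheory.Injective.comp_factorThru _ f)) a
  have hβ : (γ.comp_s16 h).comp_s16 f = β.1 := LinMap.ext (funext fun a => by
    show γ.1 (h.1 (f.1 a)) = β.1.1 a
    rw [hfh, ← hpγ]
    exact congrFun (congrArg Subtype.val he) a)
  obtain ⟨δ, hδ, hδβ⟩ :=
    exists_mem_umax_eq_of_mem_range (fun δ : LinMap B₀ B.carrier U => δ.comp_s16 f) (fun _ _ => rfl)
      β.2 ⟨_, hβ⟩
  exact ⟨⟨δ, hδ⟩, Subtype.ext hδβ⟩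

theorem umaxPrecomp_exact [HasLocalUnits C] (hU : SMulFactorsThroughInjective B₀ C U)
    {A B D : UMod.{u, v} B₀} (f : A ⟶ B) (g : B ⟶ D)
    (hf : Function.Injective f.1) (hg : Function.Surjective g.1)
    (hker : ∀ b : B.carrier, g.1 b = 0 ↔ ∃ a : A.carrier, f.1 a = b) :
    Function.Injective (umaxPrecomp (C := C) (U := U) g) ∧
      Function.Surjective (umaxPrecomp (C := C) (U := U) f) ∧
      ∀ β : ↥(umax C (LinMap B₀ B.carrier U)),
        umaxPrecomp f β = 0 ↔ ∃ γ, umaxPrecomp (C := C) (U := U) g γ = β :=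
  ⟨umaxPrecomp_injective g hg, umaxPrecomp_surjective hU f hf,
    umaxPrecomp_eq_zero_iff f g hg hker⟩

end umaxPrecomp

section moritaDuality

variable (R S : Type u) [NonUnitalRing R] [NonUnitalRing S]
  (U : Type u) [AddCommGroup U] [LMod R U] [LMod Sᵐᵒᵖ U] [SMulCommClass R Sᵐᵒᵖ U]

theorem SatisfiesI_II.smulFactorsThroughInjective (hU : SatisfiesI_II R S U) :
    SMulFactorsThroughInjective R Sᵐᵒᵖ U := by
  obtain ⟨_, _, -, -, -, -, D, -, proj, hD, -, -, -, -, hrange⟩ := hU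
  intro s
  obtain ⟨i, γ, hγ⟩ : muMap R S U s.unop ∈ _ := hrange ▸ Set.mem_range_self s.unop
  exact ⟨D.obj i, (hD i).2, proj i, γ, congrFun hγ⟩

theorem SatisfiesIII_IV.smulFactorsThroughInjective (hU : SatisfiesIII_IV R S U) :
    SMulFactorsThroughInjective Sᵐᵒᵖ R U := by
  obtain ⟨_, _, -, -, -, -, D, -, proj, hD, -, -, -, -, hrange⟩ := hU
  intro r
  obtain ⟨i, γ, hγ⟩ : lambdaMap R S U r ∈ _ := hrange ▸ Set.mem_range_self r
  exact ⟨D.obj i, (hD i).2, proj i, γ, congrFun hγ⟩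

end moritaDuality

theorem dual_hom_functors_exact
    (R S : Type u) [NonUnitalRing R] [NonUnitalRing S]
    [HasLocalUnits R] [HasLocalUnits S]
    (U : Type u) [AddCommGroup U] [LMod R U] [LMod Sᵐᵒᵖ U]
    [SMulCommClass R Sᵐᵒᵖ U] [SMulCommClass Sᵐᵒᵖ R U] :
    -- (a):
    (SatisfiesI_II R S U →
      ∀ (A B C : UMod.{u, u} R) (f : A ⟶ B) (g : B ⟶ C),
        Function.Injective f.1 → Function.Surjective g.1 →
        (∀ b : B.carrier, g.1 b = 0 ↔ ∃ a : A.carrier, f.1 a = b) →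
        (Function.Injective (dHomLMap (S := S) (U := U) g) ∧
         Function.Surjective (dHomLMap (S := S) (U := U) f) ∧
         (∀ β : DHomL R S U B.carrier,
           dHomLMap (S := S) (U := U) f β = 0 ↔
             ∃ γ : DHomL R S U C.carrier, dHomLMap (S := S) (U := U) g γ = β))) ∧
    -- (b):
    (SatisfiesIII_IV R S U →
      ∀ (A B C : UMod.{u, u} Sᵐᵒᵖ) (f : A ⟶ B) (g : B ⟶ C),
        Function.Injective f.1 → Function.Surjective g.1 →
        (∀ b : B.carrier, g.1 b = 0 ↔ ∃ a : A.carrier, f.1 a = b) →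
        (Function.Injective (dHomRMap (R := R) (U := U) g) ∧
         Function.Surjective (dHomRMap (R := R) (U := U) f) ∧
         (∀ β : DHomR R S U B.carrier,
           dHomRMap (R := R) (U := U) f β = 0 ↔
             ∃ γ : DHomR R S U C.carrier, dHomRMap (R := R) (U := U) g γ = β))) :=
  ⟨fun hU _ _ _ f g => umaxPrecomp_exact hU.smulFactorsThroughInjective f g,
    fun hU _ _ _ f g => umaxPrecomp_exact hU.smulFactorsThroughInjective f g⟩
end

section
/- Let R and S be rings with local units and let U be a Morita duality R-S-bimodule. Then every factor module of a U-reflexive unitary left R-module is U-reflexive, and every factor module of a U-reflexive unitary right S-module is U-reflexive. -/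
set_option linter.unusedVariables false

/-! ### Core: non-unital rings with local units, modules, homomorphisms, categories -/

universe u v w

open MulOpposite CategoryTheory

/-! ### Auxiliary general framework -/

section gen
variable (A B : Type u) [NonUnitalRing A] [NonUnitalRing B]
variable (U : Type u) [AddCommGroup U] [LMod A U] [LMod B U]
  [SMulCommClass A B U] [SMulCommClass B A U]

def gEval (X : Type u) [AddCommGroup X] [LMod A X] (x : X) :
    LinMap B (↥(umax B (LinMap A X U))) U :=
  ⟨fun β => β.1.1 x, ⟨fun _ _ => rfl, fun _ _ => rfl⟩⟩

def gRefl (X : Type u) [AddCommGroup X] [LMod A X] : Prop :=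
  ∃ h : ∀ x : X, gEval A B U X x ∈ umax A (LinMap B (↥(umax B (LinMap A X U))) U),
    Function.Bijective (fun x : X =>
      (⟨gEval A B U X x, h x⟩ : ↥(umax A (LinMap B (↥(umax B (LinMap A X U))) U))))

end gen

theorem exists_local_unit {A : Type u} [NonUnitalRing A] [HasLocalUnits A]
    {X : Type v} [AddCommGroup X] [LMod A X] (hXu : IsUnitary A X) (x : X) :
    ∃ e : A, e • x = x := by
  classical
  have hx := hXu x
  induction hx using AddSubgroup.closure_induction with
  | mem y hy =>
    obtain ⟨a, n, rfl⟩ := hy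
    obtain ⟨e, _, h⟩ := HasLocalUnits.exists_unit {a}
    exact ⟨e, by rw [← LMod.mul_smul', (h a (Finset.mem_singleton_self a)).1]⟩
  | zero => exact ⟨0, LMod.smul_zero' 0⟩
  | add y z _ _ ihy ihz =>
    obtain ⟨e₁, h₁⟩ := ihy
    obtain ⟨e₂, h₂⟩ := ihz
    obtain ⟨e, _, h⟩ := HasLocalUnits.exists_unit {e₁, e₂}
    have he₁ : e * e₁ = e₁ := (h e₁ (by simp)).1
    have he₂ : e * e₂ = e₂ := (h e₂ (by simp)).1
    have hy' : e • y = y := by rw [← h₁, ← LMod.mul_smul', he₁]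
    have hz' : e • z = z := by rw [← h₂, ← LMod.mul_smul', he₂]
    exact ⟨e, by rw [LMod.smul_add', hy', hz']⟩
  | neg y _ ihy =>
    obtain ⟨e, h⟩ := ihy
    exact ⟨e, by rw [LMod.smul_neg', h]⟩

theorem gEval_mem (A B : Type u) [NonUnitalRing A] [NonUnitalRing B]
    (U : Type u) [AddCommGroup U] [LMod A U] [LMod B U]
    [SMulCommClass A B U] [SMulCommClass B A U]
    (X : Type u) [AddCommGroup X] [LMod A X] (hXu : IsUnitary A X) (x : X) :
    gEval A B U X x ∈ umax A (LinMap B (↥(umax B (LinMap A X U))) U) := by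
  have hadd : ∀ y z : X, gEval A B U X (y + z) = gEval A B U X y + gEval A B U X z :=
    fun y z => LinMap.ext (funext fun β => β.1.2.map_add y z)
  have hsmul : ∀ (a : A) (y : X), gEval A B U X (a • y) = a • gEval A B U X y :=
    fun a y => LinMap.ext (funext fun β => β.1.2.map_smul a y)
  have hneg : ∀ y : X, gEval A B U X (-y) = -gEval A B U X y :=
    fun y => LinMap.ext (funext fun β => β.1.2.map_neg y)
  have h0 : gEval A B U X 0 = 0 :=
    LinMap.ext (funext fun β => β.1.2.map_zero)
  have hx := hXu x
  induction hx using AddSubgroup.closure_induction with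
  | mem y hy =>
    obtain ⟨a, n, rfl⟩ := hy
    rw [hsmul]; exact smul_mem_umax a _
  | zero => rw [h0]; exact AddSubgroup.zero_mem _
  | add y z _ _ ihy ihz => rw [hadd]; exact AddSubgroup.add_mem _ ihy ihz
  | neg y _ ihy => rw [hneg]; exact AddSubgroup.neg_mem _ ihy

theorem umod_mono {A : Type u} [NonUnitalRing A] {X Y : UMod.{u, v} A} (f : X ⟶ Y)
    (hf : Function.Injective f.1) : CategoryTheory.Mono f :=
  ⟨fun u v h => LinMap.ext (funext fun z => hf (congrFun (congrArg Subtype.val h) z))⟩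
theorem keyFactor (A B : Type u) [NonUnitalRing A] [NonUnitalRing B]
    [HasLocalUnits A] [HasLocalUnits B]
    (U : Type u) [AddCommGroup U] [LMod A U] [LMod B U]
    [SMulCommClass A B U] [SMulCommClass B A U]
    {ι₁ : Type u} (Dcog : ι₁ → UMod.{u, u} A)
    (hcog : IsCogenSet A {M | ∃ i, M = Dcog i})
    (incl : ∀ i, LinMap A (Dcog i).carrier U)
    (projA : ∀ i, LinMap A U (Dcog i).carrier)
    (hpi : ∀ i x, (projA i).1 ((incl i).1 x) = x)
    (hmu : ∀ i, ∃ b : B, ∀ x : U, b • x = (incl i).1 ((projA i).1 x))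
    {ι₂ : Type u} (Dinj : ι₂ → UMod.{u, u} B)
    (hinjD : ∀ i, CategoryTheory.Injective (Dinj i))
    (projB : ∀ i, LinMap B U (Dinj i).carrier)
    (hfact : ∀ a : A, ∃ i, ∃ γ : LinMap B (Dinj i).carrier U,
      ∀ x : U, a • x = γ.1 ((projB i).1 x))
    (M : Type u) [AddCommGroup M] [LMod A M] (hMu : IsUnitary A M)
    (hrefl : gRefl A B U M)
    (K : AddSubgroup M) [LMod A (M ⧸ K)]
    (hq : ∀ (a : A) (m : M),
      a • (QuotientAddGroup.mk m : M ⧸ K) = QuotientAddGroup.mk (a • m)) :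
    gRefl A B U (M ⧸ K) := by
  classical
  have hsurj : Function.Surjective (QuotientAddGroup.mk : M → M ⧸ K) :=
    QuotientAddGroup.mk_surjective
  -- the quotient is unitary
  have hNu : IsUnitary A (M ⧸ K) := by
    intro n
    obtain ⟨m, rfl⟩ := hsurj n
    have hm := hMu m
    induction hm using AddSubgroup.closure_induction with
    | mem y hy =>
      obtain ⟨a, n', rfl⟩ := hy
      exact AddSubgroup.subset_closure ⟨a, QuotientAddGroup.mk n', (hq a n').symm⟩
    | zero => rw [QuotientAddGroup.mk_zero]; exact AddSubgroup.zero_mem _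
    | add y z _ _ ihy ihz =>
      rw [QuotientAddGroup.mk_add]; exact AddSubgroup.add_mem _ ihy ihz
    | neg y _ ihy =>
      rw [QuotientAddGroup.mk_neg]; exact AddSubgroup.neg_mem _ ihy
  -- precomposition with the projection, on dual modules
  let T : LinMap A (M ⧸ K) U → LinMap A M U := fun β =>
    ⟨fun m => β.1 (QuotientAddGroup.mk m),
     ⟨fun x y => by rw [QuotientAddGroup.mk_add, β.2.map_add],
      fun a m => by rw [← hq, β.2.map_smul]⟩⟩
  have hTadd : ∀ β β' : LinMap A (M ⧸ K) U, T (β + β') = T β + T β' :=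
    fun β β' => LinMap.ext (funext fun m => rfl)
  have hTsmul : ∀ (b : B) (β : LinMap A (M ⧸ K) U), T (b • β) = b • T β :=
    fun b β => LinMap.ext (funext fun m => rfl)
  let pS : ↥(umax B (LinMap A (M ⧸ K) U)) → ↥(umax B (LinMap A M U)) := fun β =>
    ⟨T β.1, umax_mapsTo T hTadd hTsmul β.2⟩
  let Nobj : UMod.{u, u} A := ⟨M ⧸ K, hNu⟩
  let D1Nobj : UMod.{u, u} B := ⟨↥(umax B (LinMap A (M ⧸ K) U)), umax_unitary⟩
  let D1Mobj : UMod.{u, u} B := ⟨↥(umax B (LinMap A M U)), umax_unitary⟩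
  let pSm : D1Nobj ⟶ D1Mobj :=
    ⟨pS, ⟨fun β β' => Subtype.ext (hTadd β.1 β'.1),
          fun b β => Subtype.ext (hTsmul b β.1)⟩⟩
  have hpSinj : Function.Injective pS := by
    intro β β' h
    apply Subtype.ext; apply LinMap.ext; funext n
    obtain ⟨m, rfl⟩ := hsurj n
    exact congrFun (congrArg (fun g => g.1.1) h) m
  haveI : CategoryTheory.Mono pSm := umod_mono pSm hpSinj
  -- separation: dual elements separate points of the quotient
  have hsep : ∀ n : M ⧸ K,
      (∀ β : ↥(umax B (LinMap A (M ⧸ K) U)), β.1.1 n = 0) → n = 0 := by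
    intro n hzero
    by_contra hn
    obtain ⟨e, he⟩ := exists_local_unit hNu n
    have hAu : IsUnitary A A := by
      intro a
      obtain ⟨e', _, h'⟩ := HasLocalUnits.exists_unit {a}
      exact AddSubgroup.subset_closure ⟨e', a, ((h' a (Finset.mem_singleton_self a)).1).symm⟩
    let Aobj : UMod.{u, u} A := ⟨A, hAu⟩
    let f : Aobj ⟶ Nobj :=
      ⟨fun a => a • n, ⟨fun a b => LMod.add_smul' a b n, fun a b => LMod.mul_smul' a b n⟩⟩
    have hfne : f ≠ (0 : Aobj ⟶ Nobj) := by
      intro h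
      have h2 : e • n = 0 := congrFun (congrArg Subtype.val h) e
      rw [he] at h2
      exact hn h2
    obtain ⟨U', hU', h', hne⟩ := hcog Aobj Nobj f 0 hfne
    obtain ⟨i, rfl⟩ := hU'
    have hex : ∃ a : A, h'.1 (a • n) ≠ 0 := by
      by_contra hc
      push_neg at hc
      apply hne
      apply LinMap.ext; funext a
      show h'.1 (a • n) = h'.1 0
      rw [hc a, h'.2.map_zero]
    obtain ⟨a, ha⟩ := hex
    have hhn : h'.1 n ≠ 0 := by
      intro h0
      exact ha (by rw [h'.2.map_smul, h0, LMod.smul_zero'])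
    obtain ⟨b, hb⟩ := hmu i
    let β₀ : LinMap A (M ⧸ K) U :=
      ⟨fun n' => (incl i).1 (h'.1 n'),
        ⟨fun x y => by rw [h'.2.map_add, (incl i).2.map_add],
         fun r x => by rw [h'.2.map_smul, (incl i).2.map_smul]⟩⟩
    have hβmem : b • β₀ ∈ umax B (LinMap A (M ⧸ K) U) := smul_mem_umax b β₀
    have h3 : b • ((incl i).1 (h'.1 n)) = 0 := hzero ⟨b • β₀, hβmem⟩
    rw [hb, hpi] at h3
    have h4 := congrArg (projA i).1 h3
    rw [hpi, (projA i).2.map_zero] at h4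
    exact hhn h4
  have hNmem : ∀ x : M ⧸ K,
      gEval A B U (M ⧸ K) x ∈ umax A (LinMap B (↥(umax B (LinMap A (M ⧸ K) U))) U) :=
    fun x => gEval_mem A B U (M ⧸ K) hNu x
  refine ⟨hNmem, ?_, ?_⟩
  · -- injective
    intro n₁ n₂ h12
    have hg : (gEval A B U (M ⧸ K) n₁).1 = (gEval A B U (M ⧸ K) n₂).1 :=
      congrArg Subtype.val (congrArg Subtype.val h12)
    have h' : ∀ β : ↥(umax B (LinMap A (M ⧸ K) U)), β.1.1 n₁ = β.1.1 n₂ :=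
      fun β => congrFun hg β
    have hs : n₁ - n₂ = 0 := by
      apply hsep
      intro β
      have hβ : β.1.1 (n₁ - n₂) = β.1.1 n₁ - β.1.1 n₂ := by
        rw [sub_eq_add_neg, β.1.2.map_add, β.1.2.map_neg, sub_eq_add_neg]
      rw [hβ, h' β, sub_self]
    exact sub_eq_zero.mp hs
  · -- surjective
    rintro ⟨Λ, hΛ⟩
    have hstep : ∀ Λ₀ ∈ umax A (LinMap B (↥(umax B (LinMap A (M ⧸ K) U))) U),
        ∃ α : LinMap B (↥(umax B (LinMap A M U))) U,
          α ∈ umax A (LinMap B (↥(umax B (LinMap A M U))) U) ∧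
          ∀ β : ↥(umax B (LinMap A (M ⧸ K) U)), α.1 (pS β) = Λ₀.1 β := by
      intro Λ₀ hΛ₀
      induction hΛ₀ using AddSubgroup.closure_induction with
      | mem g hg =>
        obtain ⟨a, Λ₁, rfl⟩ := hg
        obtain ⟨i, γ, hγ⟩ := hfact a
        let θ : D1Nobj ⟶ Dinj i :=
          ⟨fun β => (projB i).1 (Λ₁.1 β),
           ⟨fun x y => by rw [Λ₁.2.map_add, (projB i).2.map_add],
            fun b x => by rw [Λ₁.2.map_smul, (projB i).2.map_smul]⟩⟩
        obtain ⟨δ, hδ⟩ := (hinjD i).factors θ pSm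
        obtain ⟨e, _, hea⟩ := HasLocalUnits.exists_unit {a}
        have hea' : e * a = a := (hea a (Finset.mem_singleton_self a)).1
        let α₀ : LinMap B (↥(umax B (LinMap A M U))) U :=
          ⟨fun β' => γ.1 (δ.1 β'),
           ⟨fun x y => by rw [δ.2.map_add, γ.2.map_add],
            fun b x => by rw [δ.2.map_smul, γ.2.map_smul]⟩⟩
        refine ⟨e • α₀, smul_mem_umax e α₀, fun β => ?_⟩
        have h1 : δ.1 (pS β) = (projB i).1 (Λ₁.1 β) :=
          congrFun (congrArg Subtype.val hδ) β
        show e • γ.1 (δ.1 (pS β)) = a • Λ₁.1 β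
        rw [h1, ← hγ, ← LMod.mul_smul', hea']
      | zero => exact ⟨0, AddSubgroup.zero_mem _, fun β => rfl⟩
      | add g₁ g₂ _ _ ih₁ ih₂ =>
        obtain ⟨α₁, hm₁, he₁⟩ := ih₁
        obtain ⟨α₂, hm₂, he₂⟩ := ih₂
        exact ⟨α₁ + α₂, AddSubgroup.add_mem _ hm₁ hm₂,
          fun β => by rw [LinMap.add_apply, LinMap.add_apply, he₁ β, he₂ β]⟩
      | neg g _ ih =>
        obtain ⟨α₁, hm₁, he₁⟩ := ih
        exact ⟨-α₁, AddSubgroup.neg_mem _ hm₁,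
          fun β => by rw [LinMap.neg_apply, LinMap.neg_apply, he₁ β]⟩
    obtain ⟨α, hαmem, hαeq⟩ := hstep Λ hΛ
    obtain ⟨hM, _, hMsurj⟩ := hrefl
    obtain ⟨m, hm⟩ := hMsurj ⟨α, hαmem⟩
    refine ⟨QuotientAddGroup.mk m, ?_⟩
    apply Subtype.ext
    apply LinMap.ext
    funext β
    have hm' : gEval A B U M m = α := congrArg Subtype.val hm
    have h2 : α.1 (pS β) = β.1.1 (QuotientAddGroup.mk m) :=
      congrFun (congrArg Subtype.val hm'.symm) (pS β)
    show β.1.1 (QuotientAddGroup.mk m) = Λ.1 β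
    exact h2.symm.trans (hαeq β)
/-! ## STATEMENT 17
Over a Morita duality bimodule, factor modules of `U`-reflexive modules are
`U`-reflexive (on both sides). -/
theorem factor_modules_reflexive
    (R S : Type u) [NonUnitalRing R] [NonUnitalRing S]
    [HasLocalUnits R] [HasLocalUnits S]
    (U : Type u) [AddCommGroup U] [LMod R U] [LMod Sᵐᵒᵖ U]
    [SMulCommClass R Sᵐᵒᵖ U] [SMulCommClass Sᵐᵒᵖ R U]
    (hU : IsMoritaDualityBimod R S U) :
    -- left modules:
    (∀ (M : Type u) [AddCommGroup M] [LMod R M], IsUnitary R M → IsLReflexive R S U M →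
      ∀ K : AddSubgroup M, (∀ (r : R) (x : M), x ∈ K → r • x ∈ K) →
      ∀ [LMod R (M ⧸ K)],
        (∀ (r : R) (m : M),
          r • (QuotientAddGroup.mk m : M ⧸ K) = QuotientAddGroup.mk (r • m)) →
        IsLReflexive R S U (M ⧸ K)) ∧
    -- right modules:
    (∀ (Y : Type u) [AddCommGroup Y] [LMod Sᵐᵒᵖ Y], IsUnitary Sᵐᵒᵖ Y →
      IsRReflexive R S U Y →
      ∀ K : AddSubgroup Y, (∀ (s : Sᵐᵒᵖ) (y : Y), y ∈ K → s • y ∈ K) →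
      ∀ [LMod Sᵐᵒᵖ (Y ⧸ K)],
        (∀ (s : Sᵐᵒᵖ) (y : Y),
          s • (QuotientAddGroup.mk y : Y ⧸ K) = QuotientAddGroup.mk (s • y)) →
        IsRReflexive R S U (Y ⧸ K)) := by
  obtain ⟨hUuL, hUuR, hI_II, hIII_IV⟩ := hU
  obtain ⟨ι₁, rel₁, _, _, _, _, D₁, c₁, proj₁, hprops₁, hcog₁, hpi₁, _, _, hmrange⟩ := hI_II
  obtain ⟨ι₂, rel₂, _, _, _, _, D₂, c₂, proj₂, hprops₂, hcog₂, hpi₂, _, _, hlrange⟩ := hIII_IV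
  have hmu₁ : ∀ i, ∃ b : Sᵐᵒᵖ, ∀ x : U, b • x = (c₁.incl i).1 ((proj₁ i).1 x) := by
    intro i
    have hg : (⟨fun x => (c₁.incl i).1 ((proj₁ i).1 x),
        ⟨fun x y => by rw [(proj₁ i).2.map_add, (c₁.incl i).2.map_add],
         fun r x => by rw [(proj₁ i).2.map_smul, (c₁.incl i).2.map_smul]⟩⟩ : LinMap R U U)
        ∈ Set.range (muMap R S U) := by
      rw [hmrange]
      exact ⟨i, c₁.incl i, rfl⟩
    obtain ⟨s, hs⟩ := hg
    exact ⟨MulOpposite.op s, fun x => congrFun (congrArg Subtype.val hs) x⟩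
  have hmu₂ : ∀ i, ∃ b : R, ∀ x : U, b • x = (c₂.incl i).1 ((proj₂ i).1 x) := by
    intro i
    have hg : (⟨fun x => (c₂.incl i).1 ((proj₂ i).1 x),
        ⟨fun x y => by rw [(proj₂ i).2.map_add, (c₂.incl i).2.map_add],
         fun s x => by rw [(proj₂ i).2.map_smul, (c₂.incl i).2.map_smul]⟩⟩ : LinMap Sᵐᵒᵖ U U)
        ∈ Set.range (lambdaMap R S U) := by
      rw [hlrange]
      exact ⟨i, c₂.incl i, rfl⟩
    obtain ⟨r, hr⟩ := hg
    exact ⟨r, fun x => congrFun (congrArg Subtype.val hr) x⟩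
  have hfact₂ : ∀ r : R, ∃ i, ∃ γ : LinMap Sᵐᵒᵖ (D₂.obj i).carrier U,
      ∀ x : U, r • x = γ.1 ((proj₂ i).1 x) := by
    intro r
    have hmem : lambdaMap R S U r ∈ Set.range (lambdaMap R S U) := ⟨r, rfl⟩
    rw [hlrange] at hmem
    obtain ⟨i, γ, hγ⟩ := hmem
    exact ⟨i, γ, fun x => congrFun hγ x⟩
  have hfact₁ : ∀ a : Sᵐᵒᵖ, ∃ i, ∃ γ : LinMap R (D₁.obj i).carrier U,
      ∀ x : U, a • x = γ.1 ((proj₁ i).1 x) := by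
    intro a
    have hmem : muMap R S U a.unop ∈ Set.range (muMap R S U) := ⟨a.unop, rfl⟩
    rw [hmrange] at hmem
    obtain ⟨i, γ, hγ⟩ := hmem
    exact ⟨i, γ, fun x => congrFun hγ x⟩
  constructor
  · intro M _ _ hMu hrefl K hK _ hq
    exact keyFactor R Sᵐᵒᵖ U D₁.obj hcog₁ c₁.incl proj₁ hpi₁ hmu₁
      D₂.obj (fun i => (hprops₂ i).2) proj₂ hfact₂ M hMu hrefl K hq
  · intro Y _ _ hYu hrefl K hK _ hq
    exact keyFactor Sᵐᵒᵖ R U D₂.obj hcog₂ c₂.incl proj₂ hpi₂ hmu₂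
      D₁.obj (fun i => (hprops₁ i).2) proj₁ hfact₁ Y hYu hrefl K hq
end
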